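/- arXiv:2402.00522 — 8 statements merged into one kernel-verified Lean document; each statement's English description precedes it below -/
import Mathlib

section
/- For every positive integer n there exists a constant C > 0, depending only on n, with the following property: for every positive integer T and every positive integer m there exist real coefficients α₁,…,α_m and exponents β₁,…,β_m with β_k > 0 for every k ∈ {1,…,m}, such that ∑_{s=0}^{∞} | 𝟙{s = T} − ∑_{k=1}^{m} α_k e^{−β_k s} | ≤ C · e^{0.01(n+1)T} / mⁿ. -/
/-!
With `x = 1/4` and `a = m - T ≥ 1`, the polynomial
`P(y) = (y / x^T)^a ∏_{j<T} (x^j - y) / (x^j - x^T)` has degree `m` and no constant term, so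
`s ↦ P(x^s)` is a sum of the `m` exponentials `e^{-k s log 4}`, `1 ≤ k ≤ m`. It vanishes for
`s < T` and equals `1` at `s = T`; for `s > T` each factor of the product is at most
`(1 - x^{T-j})⁻¹`, and the Weierstrass product inequality bounds the product of these by `3/2`.
So the `ℓ¹` error is at most `2 · 4^{-(m-T)}`, and `4^{-(m-T)} mⁿ ≤ n! 100ⁿ e^{0.01 T}` because
`mⁿ ≤ n! 100ⁿ e^{0.01 m}`. For `m ≤ T` the zero sum already has error `1`.
-/

open Finset Polynomial Real
open scoped Nat

theorem Finset.one_sub_sum_le_prod_one_sub {ι R : Type*} [CommRing R] [LinearOrder R]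
    [IsStrictOrderedRing R] (s : Finset ι) {a : ι → R} (h0 : ∀ i ∈ s, 0 ≤ a i)
    (h1 : ∀ i ∈ s, a i ≤ 1) : 1 - ∑ i ∈ s, a i ≤ ∏ i ∈ s, (1 - a i) := by
  classical
  induction s using Finset.induction_on with
  | empty => simp
  | insert i s hi ih =>
    rw [sum_insert hi, prod_insert hi]
    have ih := ih (fun j hj => h0 j (mem_insert_of_mem hj))
      (fun j hj => h1 j (mem_insert_of_mem hj))
    have hai := h0 i (mem_insert_self i s)
    have hsum : 0 ≤ ∑ j ∈ s, a j := sum_nonneg fun j hj => h0 j (mem_insert_of_mem hj)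
    nlinarith [mul_le_mul_of_nonneg_left ih (sub_nonneg.2 (h1 i (mem_insert_self i s)))]

lemma one_sub_div_one_sub_le_prod_one_sub_pow {x : ℝ} (hx0 : 0 ≤ x) (hx1 : x < 1) (T : ℕ) :
    1 - x / (1 - x) ≤ ∏ j ∈ range T, (1 - x ^ (T - j)) := by
  have hgeom : ∑ j ∈ range T, x ^ (T - j) ≤ x / (1 - x) := by
    calc ∑ j ∈ range T, x ^ (T - j) = ∑ i ∈ range T, x ^ (1 + i) := by
          rw [← sum_range_reflect]
          refine sum_congr rfl fun i hi => ?_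
          rw [mem_range] at hi
          congr 1
          omega
      _ = ∑ i ∈ Ico 1 (T + 1), x ^ i := by rw [sum_Ico_eq_sum_range, Nat.add_sub_cancel]
      _ ≤ x ^ 1 / (1 - x) := geom_sum_Ico_le_of_lt_one hx0 hx1
      _ = x / (1 - x) := by rw [pow_one]
  refine le_trans (by linarith) (one_sub_sum_le_prod_one_sub _ (fun j _ => pow_nonneg hx0 _)
    fun j _ => pow_le_one₀ hx0 hx1.le)

lemma pow_sub_pow_pos_of_lt_one {x : ℝ} (hx0 : 0 < x) (hx1 : x < 1) {j T : ℕ} (hj : j < T) :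
    0 < x ^ j - x ^ T :=
  sub_pos.2 (pow_lt_pow_right_of_lt_one₀ hx0 hx1 hj)

lemma tsum_le_of_eq_zero_of_le_geometric {f : ℕ → ℝ} {N : ℕ} {c q : ℝ} (hf : ∀ s, 0 ≤ f s)
    (hzero : ∀ s < N, f s = 0) (hq0 : 0 ≤ q) (hq1 : q < 1) (hle : ∀ r, f (r + N) ≤ c * q ^ r) :
    ∑' s, f s ≤ c / (1 - q) := by
  have hgeom := (summable_geometric_of_lt_one hq0 hq1).mul_left c
  have hsupp : Function.support f ⊆ Set.range (· + N) := fun s hs =>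
    ⟨s - N, Nat.sub_add_cancel (not_lt.1 fun h => hs (hzero s h))⟩
  rw [← (add_left_injective N).tsum_eq hsupp, div_eq_mul_inv, ← tsum_geometric_of_lt_one hq0 hq1,
    ← tsum_mul_left]
  exact (hgeom.of_nonneg_of_le (fun r => hf _) hle).tsum_le_tsum hle hgeom

lemma exists_sum_exp_eq_eval_pow {x : ℝ} (hx0 : 0 < x) (hx1 : x < 1) {m : ℕ} {p : ℝ[X]}
    (hdeg : p.natDegree ≤ m) (hp0 : p.coeff 0 = 0) :
    ∃ α β : Fin m → ℝ, (∀ k, 0 < β k) ∧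
      ∀ s : ℕ, ∑ k, α k * exp (-(β k) * s) = p.eval (x ^ s) := by
  refine ⟨fun k => p.coeff (k + 1), fun k => (k + 1) * -log x,
    fun k => mul_pos (by positivity) (neg_pos.2 (log_neg hx0 hx1)), fun s => ?_⟩
  have hexp (k : ℕ) : exp (-((k + 1) * -log x) * s) = (x ^ s) ^ (k + 1) := by
    rw [← pow_mul, mul_comm s, ← exp_log (pow_pos hx0 _), Real.log_pow]
    push_cast
    ring_nf
  simp only [hexp]
  rw [eval_eq_sum_range' (Nat.lt_succ_of_le hdeg), sum_range_succ', hp0, zero_mul, add_zero,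
    ← Fin.sum_univ_eq_sum_range (fun i => p.coeff (i + 1) * (x ^ s) ^ (i + 1))]

noncomputable def peakPoly (x : ℝ) (T a : ℕ) : ℝ[X] :=
  (C (x ^ T)⁻¹ * X) ^ a * ∏ j ∈ range T, C (x ^ j - x ^ T)⁻¹ * (C (x ^ j) - X)

namespace peakPoly

variable {x : ℝ} {T a : ℕ}

lemma eval_eq (y : ℝ) :
    (peakPoly x T a).eval y = (y / x ^ T) ^ a * ∏ j ∈ range T, (x ^ j - y) / (x ^ j - x ^ T) := by
  simp only [peakPoly, eval_mul, eval_pow, eval_C, eval_X, eval_prod, eval_sub, div_eq_inv_mul]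

lemma natDegree_le : (peakPoly x T a).natDegree ≤ a + T := by
  refine natDegree_mul_le.trans (add_le_add ?_ ?_)
  · have h : (C (x ^ T)⁻¹ * X).natDegree ≤ 1 := by compute_degree
    simpa using natDegree_pow_le_of_le a h
  · have h (j : ℕ) : (C (x ^ j - x ^ T)⁻¹ * (C (x ^ j) - X)).natDegree ≤ 1 := by compute_degree
    refine (natDegree_prod_le _ _).trans ?_
    simpa using sum_le_sum fun j (_ : j ∈ range T) => h j

lemma coeff_zero (ha : a ≠ 0) : (peakPoly x T a).coeff 0 = 0 := by
  rw [coeff_zero_eq_eval_zero, eval_eq, zero_div, zero_pow ha, zero_mul]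

lemma eval_pow_of_lt {s : ℕ} (hs : s < T) : (peakPoly x T a).eval (x ^ s) = 0 := by
  rw [eval_eq, prod_eq_zero (mem_range.2 hs) (by rw [sub_self, zero_div]), mul_zero]

lemma eval_pow_self (hx0 : 0 < x) (hx1 : x < 1) : (peakPoly x T a).eval (x ^ T) = 1 := by
  rw [eval_eq, div_self (pow_pos hx0 T).ne', one_pow, one_mul]
  refine prod_eq_one fun j hj => div_self (sub_ne_zero.2 ?_)
  exact (pow_lt_pow_right_of_lt_one₀ hx0 hx1 (mem_range.1 hj)).ne'

lemma eval_pow_nonneg (hx0 : 0 < x) (hx1 : x < 1) {s : ℕ} (hs : T ≤ s) :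
    0 ≤ (peakPoly x T a).eval (x ^ s) := by
  rw [eval_eq]
  refine mul_nonneg (by positivity) (prod_nonneg fun j hj => div_nonneg ?_ ?_)
  · exact sub_nonneg.2 (pow_le_pow_of_le_one hx0.le hx1.le (by grind))
  · exact (pow_sub_pow_pos_of_lt_one hx0 hx1 (mem_range.1 hj)).le

lemma eval_pow_le (hx0 : 0 < x) (hx1 : x < 1) {s : ℕ} (hs : T ≤ s) :
    (peakPoly x T a).eval (x ^ s) ≤ x ^ ((s - T) * a) / ∏ j ∈ range T, (1 - x ^ (T - j)) := by
  have hfactor {j : ℕ} (hj : j < T) : (x ^ j - x ^ s) / (x ^ j - x ^ T) ≤ (1 - x ^ (T - j))⁻¹ := by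
    have hsplit : x ^ j - x ^ T = x ^ j * (1 - x ^ (T - j)) := by
      rw [mul_sub, mul_one, ← pow_add, Nat.add_sub_cancel' hj.le]
    have hpos : 0 < 1 - x ^ (T - j) := by
      have := pow_sub_pow_pos_of_lt_one hx0 hx1 hj
      rw [hsplit] at this
      exact pos_of_mul_pos_right this (pow_nonneg hx0.le j)
    rw [div_le_iff₀ (pow_sub_pow_pos_of_lt_one hx0 hx1 hj), hsplit, mul_comm (x ^ j),
      inv_mul_cancel_left₀ hpos.ne']
    linarith [pow_pos hx0 s]
  rw [eval_eq, div_eq_mul_inv (x ^ s), ← pow_sub₀ _ hx0.ne' hs, ← pow_mul, div_eq_mul_inv,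
    ← prod_inv_distrib]
  refine mul_le_mul_of_nonneg_left (prod_le_prod (fun j hj => div_nonneg ?_ ?_) ?_) (by positivity)
  · exact sub_nonneg.2 (pow_le_pow_of_le_one hx0.le hx1.le (by grind))
  · exact (pow_sub_pow_pos_of_lt_one hx0 hx1 (mem_range.1 hj)).le
  · exact fun j hj => hfactor (mem_range.1 hj)

end peakPoly

lemma tsum_abs_indicator_sub_peakPoly_le {x : ℝ} (hx0 : 0 < x) (hx : x < 1 / 2) (T : ℕ) {a : ℕ}
    (ha : a ≠ 0) :
    ∑' s : ℕ, |(if s = T then (1 : ℝ) else 0) - (peakPoly x T a).eval (x ^ s)| ≤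
      x ^ a / (1 - 2 * x) := by
  have hx1 : x < 1 := by linarith
  have hprod := one_sub_div_one_sub_le_prod_one_sub_pow hx0.le hx1 T
  have hden : 0 < 1 - x / (1 - x) := by
    rw [sub_pos, div_lt_one (by linarith)]; linarith
  have hc : x ^ a / (1 - x / (1 - x)) / (1 - x) = x ^ a / (1 - 2 * x) := by
    have h1 : 1 - x ≠ 0 := by linarith
    have h2 : 1 - 2 * x ≠ 0 := by linarith
    field_simp
    ring
  rw [← hc]
  refine tsum_le_of_eq_zero_of_le_geometric (N := T + 1) (fun s => abs_nonneg _) ?_ hx0.le hx1 ?_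
  · intro s hs
    rcases (Nat.lt_succ_iff.1 hs).lt_or_eq with hs | rfl
    · rw [if_neg hs.ne, peakPoly.eval_pow_of_lt hs, sub_zero, abs_zero]
    · rw [if_pos rfl, peakPoly.eval_pow_self hx0 hx1, sub_self, abs_zero]
  · intro r
    have hs : T ≤ r + (T + 1) := by omega
    rw [if_neg (by omega), zero_sub, abs_neg, abs_of_nonneg (peakPoly.eval_pow_nonneg hx0 hx1 hs)]
    refine (peakPoly.eval_pow_le hx0 hx1 hs).trans ?_
    rw [div_mul_eq_mul_div, ← pow_add]
    refine div_le_div₀ (by positivity) (pow_le_pow_of_le_one hx0.le hx1.le ?_) hden hprod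
    have : r ≤ r * a := Nat.le_mul_of_pos_right r (Nat.pos_of_ne_zero ha)
    rw [show r + (T + 1) - T = r + 1 by omega, add_mul, one_mul]
    omega

theorem exists_sum_exp_approx_indicator (T m : ℕ) :
    ∃ α β : Fin m → ℝ, (∀ k, 0 < β k) ∧
      ∑' s : ℕ, |(if s = T then (1 : ℝ) else 0) - ∑ k, α k * exp (-(β k) * s)| ≤
        2 * 4⁻¹ ^ (m - T) := by
  rcases le_or_gt m T with hmT | hTm
  · refine ⟨0, 1, fun _ => one_pos, ?_⟩
    simp only [Pi.zero_apply, zero_mul, sum_const_zero, sub_zero, Nat.sub_eq_zero_of_le hmT]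
    simp_rw [apply_ite abs, abs_one, abs_zero, tsum_ite_eq]
    norm_num
  · have hx0 : (0 : ℝ) < 4⁻¹ := by norm_num
    obtain ⟨α, β, hβ, hα⟩ := exists_sum_exp_eq_eval_pow (m := m) hx0 (by norm_num)
      ((peakPoly.natDegree_le (x := 4⁻¹) (T := T) (a := m - T)).trans_eq (by omega))
      (peakPoly.coeff_zero (by omega))
    refine ⟨α, β, hβ, ?_⟩
    simp only [hα]
    refine (tsum_abs_indicator_sub_peakPoly_le hx0 (by norm_num) T (by omega)).trans_eq ?_
    norm_num
    ring

lemma four_inv_pow_sub_mul_pow_le (n m T : ℕ) :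
    4⁻¹ ^ (m - T) * (m : ℝ) ^ n ≤ n ! * 100 ^ n * exp (0.01 * T) := by
  have hm : (m : ℝ) ^ n ≤ n ! * 100 ^ n * exp (0.01 * m) := by
    calc (m : ℝ) ^ n = 100 ^ n * (0.01 * m) ^ n := by rw [← mul_pow, ← mul_assoc]; norm_num
      _ ≤ 100 ^ n * (n ! * exp (0.01 * m)) := by
        gcongr
        rw [← div_le_iff₀' (by positivity)]
        exact pow_div_factorial_le_exp _ (by positivity) n
      _ = n ! * 100 ^ n * exp (0.01 * m) := by ring
  have hexp : exp (0.01 * m) ≤ 4 ^ (m - T) * exp (0.01 * T) := by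
    calc exp (0.01 * m) ≤ exp (0.01 * T + (m - T : ℕ) * 0.01) := by
          gcongr
          have : (m : ℝ) ≤ T + (m - T : ℕ) := by exact_mod_cast (by omega : m ≤ T + (m - T))
          linarith
      _ = exp 0.01 ^ (m - T) * exp (0.01 * T) := by rw [exp_add, exp_nat_mul, mul_comm]
      _ ≤ 4 ^ (m - T) * exp (0.01 * T) := by
          gcongr
          calc exp 0.01 ≤ exp 1 := exp_le_exp.2 (by norm_num)
            _ ≤ 4 := by linarith [exp_one_lt_d9]
  calc 4⁻¹ ^ (m - T) * (m : ℝ) ^ n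
        ≤ 4⁻¹ ^ (m - T) * (n ! * 100 ^ n * (4 ^ (m - T) * exp (0.01 * T))) := by
        gcongr; exact hm.trans (by gcongr)
    _ = n ! * 100 ^ n * exp (0.01 * T) := by
        have h4 : (4⁻¹ : ℝ) ^ (m - T) * 4 ^ (m - T) = 1 := by rw [← mul_pow]; norm_num
        linear_combination (n ! * 100 ^ n * exp (0.01 * T)) * h4

/-- approximation of the indicator `𝟙{s = T}` in `ℓ¹(ℕ)` by sums of
`m` decaying exponentials, at rate `C · e^{0.01(n+1)T} / mⁿ`. -/
theorem stmt0 :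
    ∀ n : ℕ, 0 < n → ∃ C : ℝ, 0 < C ∧
      ∀ T m : ℕ, 0 < T → 0 < m →
        ∃ α β : Fin m → ℝ, (∀ k, 0 < β k) ∧
          (∑' s : ℕ, |(if s = T then (1 : ℝ) else 0) -
              ∑ k, α k * Real.exp (-(β k) * (s : ℝ))|)
            ≤ C * Real.exp (0.01 * ((n : ℝ) + 1) * (T : ℝ)) / (m : ℝ) ^ n := by
  intro n _
  refine ⟨2 * n ! * 100 ^ n, by positivity, fun T m _ hm => ?_⟩
  obtain ⟨α, β, hβ, herr⟩ := exists_sum_exp_approx_indicator T m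
  refine ⟨α, β, hβ, herr.trans ?_⟩
  rw [le_div_iff₀ (by positivity)]
  calc 2 * 4⁻¹ ^ (m - T) * (m : ℝ) ^ n ≤ 2 * (n ! * 100 ^ n * exp (0.01 * T)) := by
        rw [mul_assoc]
        exact mul_le_mul_of_nonneg_left (four_inv_pow_sub_mul_pow_le n m T) two_pos.le
    _ ≤ 2 * n ! * 100 ^ n * exp (0.01 * (n + 1) * T) := by
        rw [← mul_assoc, ← mul_assoc]
        gcongr
        nlinarith [(Nat.cast_nonneg n : (0 : ℝ) ≤ n), (Nat.cast_nonneg T : (0 : ℝ) ≤ T)]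
end

section
/- For every positive integer n there exists a constant C > 0, depending only on n, with the following property: for every positive integer T and every positive integer m there exist real coefficients α₁,…,α_m and exponents β₁,…,β_m with β_k > 0 for every k, such that for every integer B with 1 ≤ B ≤ T (the same coefficients working for all such B simultaneously), ∑_{s=0}^{∞} | 𝟙{s = B} − ∑_{k=1}^{m} α_k e^{−β_k (s − B)} | ≤ C · e^{0.01(n+1)T} / mⁿ. -/
open Polynomial Finset Real
open scoped Nat

/-!
With `β k = k + 1`, the substitution `y = e^{-(s - B)}` turns `∑ₖ αₖ e^{-βₖ (s - B)}` into `P(y)`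
for the polynomial `P = ∑ₖ αₖ X^{k+1}`. Taking `P(1) = 1`, `P(e^j) = 0` for `1 ≤ j ≤ T` and a zero
of order `p = m - T` at `0`, the error vanishes for `s ≤ B` and is at most `2^T e^{-p (s - B)}` for
`s > B`, so the `ℓ¹` error is `O(e^{2T - m})`. When `m ≤ 4T` the zero approximation, with error
`1`, is good enough. Either way the error is at most `2 e^{(4T - m)/400}`, and `x^n ≤ n! e^x` with
`x = m/400` turns this into the rate `e^{T/100} / mⁿ`.
-/

lemma tsum_le_of_eq_zero_of_le_geometric_s1 {f : ℕ → ℝ} {B : ℕ} {K r : ℝ}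
    (hf : ∀ s, 0 ≤ f s) (hzero : ∀ s ≤ B, f s = 0) (htail : ∀ s, B < s → f s ≤ K * r ^ (s - B))
    (hr₀ : 0 ≤ r) (hr₁ : r < 1) :
    ∑' s, f s ≤ K * r / (1 - r) := by
  have htail' (i : ℕ) : f (i + (B + 1)) ≤ K * r * r ^ i :=
    calc f (i + (B + 1)) ≤ K * r ^ (i + (B + 1) - B) := htail _ (by omega)
      _ = K * r * r ^ i := by rw [show i + (B + 1) - B = i + 1 by omega, pow_succ']; ring
  have hgeom : Summable fun i : ℕ ↦ K * r * r ^ i :=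
    (summable_geometric_of_lt_one hr₀ hr₁).mul_left _
  have hsum : Summable fun i ↦ f (i + (B + 1)) :=
    .of_nonneg_of_le (fun _ ↦ hf _) htail' hgeom
  rw [← ((summable_nat_add_iff (B + 1)).mp hsum).sum_add_tsum_nat_add (B + 1),
    sum_eq_zero fun s hs ↦ hzero s (by simpa [Nat.lt_succ_iff] using hs), zero_add]
  calc ∑' i, f (i + (B + 1)) ≤ ∑' i : ℕ, K * r * r ^ i := hsum.tsum_le_tsum htail' hgeom
    _ = K * r / (1 - r) := by rw [tsum_mul_left, tsum_geometric_of_lt_one hr₀ hr₁, div_eq_mul_inv]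

lemma sum_coeff_succ_mul_exp_eq_eval {P : ℝ[X]} {m : ℕ} (hdeg : P.natDegree ≤ m)
    (h0 : P.coeff 0 = 0) (t : ℝ) :
    ∑ k : Fin m, P.coeff (k + 1) * exp (-((k : ℝ) + 1) * t) = P.eval (exp (-t)) := by
  rw [eval_eq_sum_range' (Nat.lt_succ_of_le hdeg), sum_range_succ', h0, zero_mul, add_zero,
    ← Fin.sum_univ_eq_sum_range (fun i ↦ P.coeff (i + 1) * exp (-t) ^ (i + 1))]
  refine sum_congr rfl fun k _ ↦ ?_
  rw [← exp_nat_mul]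
  push_cast
  ring_nf

noncomputable def normalizedRootPoly (p : ℕ) (s : Finset ℝ) : ℝ[X] :=
  X ^ p * ∏ a ∈ s, C (1 - a)⁻¹ * (X - C a)

namespace normalizedRootPoly

variable (p : ℕ) (s : Finset ℝ)

lemma natDegree_le : (normalizedRootPoly p s).natDegree ≤ p + #s := by
  refine natDegree_mul_le.trans (add_le_add (natDegree_X_pow_le p) ?_)
  refine (natDegree_prod_le _ _).trans ?_
  simpa using sum_le_card_nsmul s _ 1 fun a _ ↦
    (natDegree_C_mul_le _ _).trans (natDegree_X_sub_C_le a)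

lemma eval_eq (y : ℝ) :
    (normalizedRootPoly p s).eval y = y ^ p * ∏ a ∈ s, (y - a) / (1 - a) := by
  simp [normalizedRootPoly, eval_prod, div_eq_inv_mul]

lemma coeff_zero (hp : p ≠ 0) : (normalizedRootPoly p s).coeff 0 = 0 := by
  rw [coeff_zero_eq_eval_zero, eval_eq, zero_pow hp, zero_mul]

lemma eval_one (hs : 1 ∉ s) : (normalizedRootPoly p s).eval 1 = 1 := by
  rw [eval_eq, one_pow, one_mul]
  exact prod_eq_one fun a ha ↦ div_self (sub_ne_zero.mpr (ne_of_mem_of_not_mem ha hs).symm)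

lemma eval_of_mem {a : ℝ} (ha : a ∈ s) : (normalizedRootPoly p s).eval a = 0 := by
  rw [eval_eq, prod_eq_zero ha (by rw [sub_self, zero_div]), mul_zero]

lemma abs_eval_le (hs : ∀ a ∈ s, 2 ≤ a) {y : ℝ} (hy₀ : 0 ≤ y) (hy₁ : y ≤ 1) :
    |(normalizedRootPoly p s).eval y| ≤ 2 ^ #s * y ^ p := by
  rw [eval_eq, abs_mul, abs_pow, abs_of_nonneg hy₀, mul_comm, abs_prod]
  gcongr
  refine (prod_le_prod (fun _ _ ↦ abs_nonneg _) fun a ha ↦ ?_).trans_eq (prod_const 2)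
  have := hs a ha
  rw [abs_div, abs_of_neg (by linarith : y - a < 0), abs_of_neg (by linarith : 1 - a < 0),
    div_le_iff₀ (by linarith)]
  linarith

end normalizedRootPoly

noncomputable def expSumL1Error {m : ℕ} (α β : Fin m → ℝ) (B : ℕ) : ℝ :=
  ∑' s : ℕ, |(if s = B then (1 : ℝ) else 0) - ∑ k, α k * exp (-(β k) * ((s : ℝ) - (B : ℝ)))|

lemma expSumL1Error_zero {m : ℕ} (β : Fin m → ℝ) (B : ℕ) : expSumL1Error 0 β B = 1 := by
  simp [expSumL1Error, apply_ite]

lemma two_le_exp_of_one_le {x : ℝ} (hx : 1 ≤ x) : 2 ≤ exp x := by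
  linarith [add_one_le_exp x]

lemma expSumL1Error_normalizedRootPoly_le {p T m B : ℕ} (hp : 1 ≤ p) (hm : p + T ≤ m)
    (hB : B ≤ T) :
    expSumL1Error
        (fun k : Fin m ↦ (normalizedRootPoly p ((Icc 1 T).image fun j : ℕ ↦ exp j)).coeff (k + 1))
        (fun k ↦ k + 1) B ≤
      2 ^ T * exp (-p) / (1 - exp (-p)) := by
  set roots := (Icc 1 T).image fun j : ℕ ↦ exp j
  set P := normalizedRootPoly p roots
  have hcard : #roots ≤ T := card_image_le.trans (by simp)
  have hroots : ∀ a ∈ roots, 2 ≤ a := by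
    simp only [roots, mem_image, mem_Icc]
    rintro _ ⟨j, ⟨hj, -⟩, rfl⟩
    exact two_le_exp_of_one_le (by exact_mod_cast hj)
  have hP_one : P.eval 1 = 1 :=
    normalizedRootPoly.eval_one p roots fun h ↦ by linarith [hroots 1 h]
  have hφ (s : ℕ) : ∑ k : Fin m, P.coeff (k + 1) * exp (-((k : ℝ) + 1) * ((s : ℝ) - B)) =
      P.eval (exp (-((s : ℝ) - B))) :=
    sum_coeff_succ_mul_exp_eq_eval ((normalizedRootPoly.natDegree_le p roots).trans
      (by omega))
      (normalizedRootPoly.coeff_zero p roots (by omega)) _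
  simp only [expSumL1Error, hφ]
  refine tsum_le_of_eq_zero_of_le_geometric_s1 (B := B) (fun _ ↦ abs_nonneg _) (fun s hs ↦ ?_)
    (fun s hs ↦ ?_) (exp_pos _).le (exp_lt_one_iff.mpr (neg_lt_zero.mpr (Nat.cast_pos.mpr hp)))
  · rcases hs.eq_or_lt with rfl | hlt
    · simp [hP_one]
    · have hmem : exp (-((s : ℝ) - B)) ∈ roots := mem_image.mpr
        ⟨B - s, mem_Icc.mpr ⟨by omega, by omega⟩, by push_cast [Nat.cast_sub hlt.le]; ring_nf⟩
      rw [if_neg hlt.ne, normalizedRootPoly.eval_of_mem p roots hmem, sub_zero, abs_zero]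
  · have hexp_pow : exp (-((s : ℝ) - B)) ^ p = exp (-p) ^ (s - B) := by
      rw [← exp_nat_mul, ← exp_nat_mul, Nat.cast_sub hs.le]; ring_nf
    have hy₁ : exp (-((s : ℝ) - B)) ≤ 1 := by
      have : (B : ℝ) < s := by exact_mod_cast hs
      exact exp_le_one_iff.mpr (by linarith)
    rw [if_neg hs.ne', zero_sub, abs_neg, ← hexp_pow]
    refine (normalizedRootPoly.abs_eval_le p roots hroots (exp_pos _).le hy₁).trans ?_
    gcongr
    exact one_le_two

lemma two_pow_mul_exp_neg_div_le {p : ℝ} (T : ℕ) (hp : 1 ≤ p) :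
    2 ^ T * exp (-p) / (1 - exp (-p)) ≤ 2 * exp (T - p) := by
  have hr : exp (-p) ≤ 1 / 2 := by
    rw [exp_neg, one_div]
    exact inv_anti₀ two_pos (two_le_exp_of_one_le hp)
  have h2T : (2 : ℝ) ^ T ≤ exp T :=
    calc (2 : ℝ) ^ T ≤ exp 1 ^ T := by gcongr; exact two_le_exp_of_one_le le_rfl
      _ = exp T := by rw [← exp_nat_mul, mul_one]
  have hgeom : exp (-p) / (1 - exp (-p)) ≤ 2 * exp (-p) := by
    rw [div_le_iff₀ (by linarith)]; nlinarith [exp_pos (-p)]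
  calc 2 ^ T * exp (-p) / (1 - exp (-p)) ≤ exp T * (2 * exp (-p)) := by
        rw [mul_div_assoc]
        exact mul_le_mul h2T hgeom (div_nonneg (exp_pos _).le (by linarith)) (exp_pos _).le
    _ = 2 * exp (T - p) := by rw [mul_left_comm, ← exp_add, sub_eq_add_neg]

lemma exists_expSumL1Error_le_of_lt {T m : ℕ} (hTm : T < m) :
    ∃ α β : Fin m → ℝ, (∀ k, 0 < β k) ∧ ∀ B ≤ T, expSumL1Error α β B ≤ 2 * exp (2 * T - m) := by
  refine ⟨_, _, fun k ↦ by positivity, fun B hB ↦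
    (expSumL1Error_normalizedRootPoly_le (p := m - T) (by omega) (by omega) hB).trans ?_⟩
  have hp : (1 : ℝ) ≤ (m - T : ℕ) := by exact_mod_cast (by omega : 1 ≤ m - T)
  refine (two_pow_mul_exp_neg_div_le T hp).trans_eq ?_
  rw [Nat.cast_sub hTm.le]; ring_nf

lemma exists_expSumL1Error_le (T m : ℕ) :
    ∃ α β : Fin m → ℝ, (∀ k, 0 < β k) ∧
      ∀ B ≤ T, expSumL1Error α β B ≤ 2 * exp ((4 * T - m) / 400) := by
  by_cases hm : m ≤ 4 * T
  · refine ⟨0, 1, fun _ ↦ one_pos, fun B _ ↦ ?_⟩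
    have : (m : ℝ) ≤ 4 * T := by exact_mod_cast hm
    rw [expSumL1Error_zero]
    linarith [one_le_exp (by linarith : 0 ≤ ((4 * T - m) / 400 : ℝ))]
  · obtain ⟨α, β, hβ, hα⟩ := exists_expSumL1Error_le_of_lt (by omega : T < m)
    refine ⟨α, β, hβ, fun B hB ↦ (hα B hB).trans ?_⟩
    have : 4 * (T : ℝ) < m := by exact_mod_cast not_le.mp hm
    gcongr
    linarith

/-- approximation of shifted indicators `𝟙{s = B}` in `ℓ¹(ℕ)` by shifted sums of
`m` decaying exponentials `∑ₖ αₖ e^{−βₖ(s−B)}`, with coefficients independent of `B`,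
uniformly over `1 ≤ B ≤ T`, at rate `C · e^{0.01(n+1)T} / mⁿ`. -/
theorem stmt1 :
    ∀ n : ℕ, 0 < n → ∃ C : ℝ, 0 < C ∧
      ∀ T m : ℕ, 0 < T → 0 < m →
        ∃ α β : Fin m → ℝ, (∀ k, 0 < β k) ∧
          ∀ B : ℕ, 1 ≤ B → B ≤ T →
            (∑' s : ℕ, |(if s = B then (1 : ℝ) else 0) -
                ∑ k, α k * Real.exp (-(β k) * ((s : ℝ) - (B : ℝ)))|)
              ≤ C * Real.exp (0.01 * ((n : ℝ) + 1) * (T : ℝ)) / (m : ℝ) ^ n := by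
  intro n _
  refine ⟨2 * 400 ^ n * n !, by positivity, fun T m _ hm ↦ ?_⟩
  obtain ⟨α, β, hβ, hα⟩ := exists_expSumL1Error_le T m
  refine ⟨α, β, hβ, fun B _ hBT ↦ (hα B hBT).trans ?_⟩
  have hpow : (m : ℝ) ^ n ≤ 400 ^ n * n ! * exp (m / 400) := by
    have := pow_div_factorial_le_exp (x := m / 400) (by positivity) n
    rw [div_pow, div_div, div_le_iff₀ (by positivity)] at this
    linarith
  have hexp : exp ((4 * T - m) / 400) * exp (m / 400) ≤ exp (0.01 * (n + 1) * T) := by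
    rw [← exp_add]
    gcongr
    nlinarith [(Nat.cast_nonneg n : (0 : ℝ) ≤ n), (Nat.cast_nonneg T : (0 : ℝ) ≤ T)]
  rw [le_div_iff₀ (pow_pos (Nat.cast_pos.mpr hm) n)]
  calc 2 * exp ((4 * T - m) / 400) * m ^ n
      ≤ 2 * exp ((4 * T - m) / 400) * (400 ^ n * n ! * exp (m / 400)) := by gcongr
    _ = 2 * 400 ^ n * n ! * (exp ((4 * T - m) / 400) * exp (m / 400)) := by ring
    _ ≤ 2 * 400 ^ n * n ! * exp (0.01 * (n + 1) * T) := by gcongr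
end

section
/- Let ρ : ℕ → ℝ be exponentially decaying, i.e. there exist constants C₀ > 0 and β > 0 such that |ρ(t)| ≤ C₀ e^{−β t} for all t ∈ ℕ. Then for every integer n with 1 ≤ n ≤ ⌊99β⌋ there exists a constant C > 0 (depending on ρ, β and n) such that for every positive integer m there exist real coefficients α₁,…,α_m and exponents β₁,…,β_m with β_k > 0 for every k, such that ∑_{s=0}^{∞} | ρ(s) − ∑_{k=1}^{m} α_k e^{−β_k s} | ≤ C / mⁿ. -/
/-!
For `0 < x ≤ 1/2`, a polynomial `P` with `P(0) = 0` and `deg P ≤ m` gives the sum of `m`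
exponentials `∑ₖ Pₖ e^{-kγs} = P(xˢ)`, `x = e^{-γ}`. Taking for `P` the interpolant of `ρ` at the
nodes `x⁰, …, x^{m-1}`, the error vanishes for `s < m`; the nodes are so well separated that the
Lagrange basis stays bounded by `2^m` at the later points `xˢ`, so the remaining error is the tail
`C₀ rᵐ / (1 - r)`, `r = e^{-β}`, plus a term that vanishes with `x`. As `mⁿ rᵐ` is bounded, this
is `O(m⁻ⁿ)` for every `n`.
-/
open Polynomial Finset

lemma half_pow_le_pow_sub_pow {x : ℝ} (hx0 : 0 ≤ x) (hx : x ≤ 1 / 2) {a b : ℕ} (hab : a < b) :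
    x ^ a / 2 ≤ x ^ a - x ^ b := by
  have hb : x ^ b ≤ x ^ a * x := pow_succ x a ▸ pow_le_pow_of_le_one hx0 (by linarith) hab
  nlinarith [pow_nonneg hx0 a]

lemma pow_le_two_mul_abs_pow_sub_pow {x : ℝ} (hx0 : 0 ≤ x) (hx : x ≤ 1 / 2) {a b : ℕ}
    (hab : a ≠ b) : x ^ b ≤ 2 * |x ^ a - x ^ b| := by
  rcases hab.lt_or_gt with hab | hba
  · have hgap := half_pow_le_pow_sub_pow hx0 hx hab
    have hba : x ^ b ≤ x ^ a := pow_le_pow_of_le_one hx0 (by linarith) hab.le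
    rw [abs_of_nonneg (by linarith)]
    linarith
  · have hgap := half_pow_le_pow_sub_pow hx0 hx hba
    rw [abs_sub_comm, abs_of_nonneg (by linarith [pow_nonneg hx0 b])]
    linarith

lemma Lagrange.abs_eval_basis_le {ι : Type*} [DecidableEq ι] {s : Finset ι} {v : ι → ℝ} {i : ι}
    {y c : ℝ} (hc : 0 ≤ c) (h : ∀ j ∈ s.erase i, |y - v j| ≤ c * |v i - v j|) :
    |(Lagrange.basis s v i).eval y| ≤ c ^ #(s.erase i) := by
  rw [Lagrange.basis, eval_prod, abs_prod, ← prod_const]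
  refine prod_le_prod (fun _ _ ↦ abs_nonneg _) fun j hj ↦ ?_
  rw [Lagrange.basisDivisor, eval_mul, eval_C, eval_sub, eval_X, eval_C, abs_mul, abs_inv]
  rcases eq_or_ne (v i - v j) 0 with h0 | h0
  · simp [h0, hc]
  · rw [inv_mul_le_iff₀ (abs_pos.mpr h0), mul_comm]
    exact h j hj

lemma injOn_pow_range {x : ℝ} (hx0 : 0 < x) (hx1 : x < 1) (T : ℕ) :
    Set.InjOn (x ^ ·) (range T : Set ℕ) :=
  (pow_right_injective₀ hx0 hx1.ne).injOn

-- The factor `X` makes the constant term vanish, so only exponentials with positive rates occur.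
noncomputable def geomInterp (v : ℕ → ℝ) (x : ℝ) (T : ℕ) : ℝ[X] :=
  X * Lagrange.interpolate (range T) (x ^ ·) (fun t ↦ v t / x ^ t)

lemma natDegree_geomInterp_le (v : ℕ → ℝ) {x : ℝ} (hx0 : 0 < x) (hx1 : x < 1) (T : ℕ) :
    (geomInterp v x T).natDegree ≤ T := by
  set Q := Lagrange.interpolate (range T) (x ^ ·) (fun t ↦ v t / x ^ t)
  rcases eq_or_ne Q 0 with hQ | hQ
  · simp [geomInterp, Q, hQ]
  · have hdeg : Q.natDegree < T := by
      rw [natDegree_lt_iff_degree_lt hQ, ← card_range T]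
      exact Lagrange.degree_interpolate_lt _ (injOn_pow_range hx0 hx1 T)
    rw [geomInterp, natDegree_X_mul hQ]
    omega

lemma coeff_geomInterp_zero (v : ℕ → ℝ) (x : ℝ) (T : ℕ) : (geomInterp v x T).coeff 0 = 0 :=
  coeff_X_mul_zero _

lemma eval_geomInterp_pow (v : ℕ → ℝ) {x : ℝ} (hx0 : 0 < x) (hx1 : x < 1) {T t : ℕ}
    (ht : t < T) : (geomInterp v x T).eval (x ^ t) = v t := by
  rw [geomInterp, eval_mul, eval_X,
    Lagrange.eval_interpolate_at_node _ (injOn_pow_range hx0 hx1 T) (mem_range.mpr ht)]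
  field_simp

lemma abs_eval_basis_geom_le {x y : ℝ} (hx0 : 0 < x) (hx : x ≤ 1 / 2) {T t : ℕ}
    (hy0 : 0 ≤ y) (hy : ∀ j < T, y ≤ x ^ j) :
    |(Lagrange.basis (range T) (x ^ ·) t).eval y| ≤ 2 ^ T := by
  refine (Lagrange.abs_eval_basis_le zero_le_two fun j hj ↦ ?_).trans
    (pow_le_pow_right₀ one_le_two ((card_erase_le).trans (card_range T).le))
  obtain ⟨hjt, hjT⟩ := mem_erase.mp hj
  have hyj := hy j (mem_range.mp hjT)
  calc |y - x ^ j| ≤ x ^ j := by rw [abs_of_nonpos (by linarith)]; linarith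
    _ ≤ 2 * |x ^ t - x ^ j| := pow_le_two_mul_abs_pow_sub_pow hx0.le hx hjt.symm

lemma abs_eval_geomInterp_pow_add_le {v : ℕ → ℝ} {V x : ℝ} {T : ℕ} (hV : ∀ t < T, |v t| ≤ V)
    (hx0 : 0 < x) (hx : x ≤ 1 / 2) (u : ℕ) :
    |(geomInterp v x T).eval (x ^ (T + u))| ≤ T * V * 2 ^ T * x ^ (u + 1) := by
  have hx1 : x ≤ 1 := by linarith
  have hterm : ∀ t ∈ range T, |x ^ (T + u) *
      (C (v t / x ^ t) * Lagrange.basis (range T) (x ^ ·) t).eval (x ^ (T + u))| ≤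
      V * 2 ^ T * x ^ (u + 1) := by
    intro t ht
    replace ht := mem_range.mp ht
    have hxt : x ^ (T + u) ≤ x ^ (u + 1) * x ^ t := by
      rw [← pow_add]; exact pow_le_pow_of_le_one hx0.le hx1 (by omega)
    have hvt : x ^ (T + u) * |v t / x ^ t| ≤ V * x ^ (u + 1) := by
      rw [abs_div, abs_of_pos (pow_pos hx0 t), mul_div_assoc', div_le_iff₀ (pow_pos hx0 t)]
      calc x ^ (T + u) * |v t| ≤ x ^ (u + 1) * x ^ t * V :=
            mul_le_mul hxt (hV t ht) (abs_nonneg _) (by positivity)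
        _ = V * x ^ (u + 1) * x ^ t := by ring
    have hbasis := abs_eval_basis_geom_le hx0 hx (T := T) (t := t) (pow_pos hx0 (T + u)).le
      fun j hj ↦ pow_le_pow_of_le_one hx0.le hx1 (by omega)
    rw [eval_mul, eval_C, abs_mul, abs_mul, abs_of_pos (pow_pos hx0 _), ← mul_assoc]
    calc x ^ (T + u) * |v t / x ^ t| * |(Lagrange.basis (range T) (x ^ ·) t).eval (x ^ (T + u))|
        ≤ V * x ^ (u + 1) * 2 ^ T :=
          mul_le_mul hvt hbasis (abs_nonneg _) ((by positivity : (0:ℝ) ≤ _).trans hvt)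
      _ = V * 2 ^ T * x ^ (u + 1) := by ring
  rw [geomInterp, eval_mul, eval_X, Lagrange.interpolate_apply, eval_finsetSum, mul_sum]
  calc _ ≤ ∑ t ∈ range T, V * 2 ^ T * x ^ (u + 1) :=
        (abs_sum_le_sum_abs _ _).trans (sum_le_sum hterm)
    _ = T * V * 2 ^ T * x ^ (u + 1) := by rw [sum_const, card_range, nsmul_eq_mul]; ring

lemma sum_coeff_mul_exp_eq_eval {p : ℝ[X]} {m : ℕ} (hdeg : p.natDegree ≤ m) (h0 : p.coeff 0 = 0)
    (γ : ℝ) (s : ℕ) :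
    ∑ k : Fin m, p.coeff (k + 1) * Real.exp (-((k + 1 : ℝ) * γ) * s) =
      p.eval (Real.exp (-γ) ^ s) := by
  rw [eval_eq_sum_range' (Nat.lt_succ_of_le hdeg), sum_range_succ', h0, zero_mul, add_zero,
    ← Fin.sum_univ_eq_sum_range]
  refine sum_congr rfl fun k _ ↦ ?_
  rw [← pow_mul, ← Real.exp_nat_mul]
  push_cast
  ring_nf

lemma tsum_le_tsum_of_eq_zero_of_nat_add_le {F G : ℕ → ℝ} {T : ℕ} (hF : ∀ s, 0 ≤ F s)
    (hzero : ∀ s < T, F s = 0) (hle : ∀ u, F (u + T) ≤ G u) (hG : Summable G) :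
    ∑' s, F s ≤ ∑' u, G u := by
  have hFT : Summable (fun u ↦ F (u + T)) := hG.of_nonneg_of_le (fun u ↦ hF _) hle
  rw [← ((summable_nat_add_iff T).mp hFT).sum_add_tsum_nat_add T,
    sum_eq_zero fun s hs ↦ hzero s (mem_range.mp hs), zero_add]
  exact hFT.tsum_le_tsum hle hG

lemma tsum_abs_sub_eval_geomInterp_le {ρ : ℕ → ℝ} {C₀ r x : ℝ} (hρ : ∀ s, |ρ s| ≤ C₀ * r ^ s)
    (hr0 : 0 ≤ r) (hr1 : r < 1) (hx0 : 0 < x) (hx : x ≤ 1 / 2) (T : ℕ) :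
    ∑' s, |ρ s - (geomInterp ρ x T).eval (x ^ s)| ≤
      C₀ * r ^ T / (1 - r) + T * C₀ * 2 ^ (T + 1) * x := by
  have hC₀ : 0 ≤ C₀ := by simpa using (abs_nonneg _).trans (hρ 0)
  have hρC₀ : ∀ t < T, |ρ t| ≤ C₀ := fun t _ ↦
    (hρ t).trans (mul_le_of_le_one_right hC₀ (pow_le_one₀ hr0 hr1.le))
  set K := T * C₀ * 2 ^ T * x
  have hgeom_r := summable_geometric_of_lt_one hr0 hr1
  have hgeom_x := summable_geometric_of_lt_one hx0.le (by linarith : x < 1)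
  have hle : ∀ u, |ρ (u + T) - (geomInterp ρ x T).eval (x ^ (u + T))| ≤
      C₀ * r ^ T * r ^ u + K * x ^ u := by
    intro u
    have hρu : |ρ (u + T)| ≤ C₀ * r ^ T * r ^ u := by
      rw [mul_assoc, ← pow_add, add_comm T]; exact hρ _
    have hPu : |(geomInterp ρ x T).eval (x ^ (u + T))| ≤ K * x ^ u := by
      rw [add_comm u]
      calc _ ≤ T * C₀ * 2 ^ T * x ^ (u + 1) := abs_eval_geomInterp_pow_add_le hρC₀ hx0 hx u
        _ = K * x ^ u := by ring
    exact (abs_sub _ _).trans (add_le_add hρu hPu)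
  refine (tsum_le_tsum_of_eq_zero_of_nat_add_le (fun _ ↦ abs_nonneg _) (fun s hs ↦ ?_) hle
    ((hgeom_r.mul_left _).add (hgeom_x.mul_left _))).trans ?_
  · rw [eval_geomInterp_pow ρ hx0 (by linarith) hs, sub_self, abs_zero]
  rw [(hgeom_r.mul_left _).tsum_add (hgeom_x.mul_left _), tsum_mul_left, tsum_mul_left,
    tsum_geometric_of_lt_one hr0 hr1, tsum_geometric_of_lt_one hx0.le (by linarith),
    ← div_eq_mul_inv]
  have hx2 : (1 - x)⁻¹ ≤ 2 := by rw [inv_le_comm₀ (by linarith) two_pos]; linarith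
  have hK : 0 ≤ K := by positivity
  calc C₀ * r ^ T / (1 - r) + K * (1 - x)⁻¹ ≤ C₀ * r ^ T / (1 - r) + K * 2 := by gcongr
    _ = C₀ * r ^ T / (1 - r) + T * C₀ * 2 ^ (T + 1) * x := by ring

theorem exists_expSum_tsum_abs_sub_le {ρ : ℕ → ℝ} {C₀ r : ℝ} (hρ : ∀ s, |ρ s| ≤ C₀ * r ^ s)
    (hr0 : 0 ≤ r) (hr1 : r < 1) (m : ℕ) {ε : ℝ} (hε : 0 < ε) :
    ∃ α b : Fin m → ℝ, (∀ k, 0 < b k) ∧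
      ∑' s : ℕ, |ρ s - ∑ k, α k * Real.exp (-(b k) * (s : ℝ))| ≤ C₀ * r ^ m / (1 - r) + ε := by
  have hC₀ : 0 ≤ C₀ := by simpa using (abs_nonneg _).trans (hρ 0)
  set D : ℝ := m * C₀ * 2 ^ (m + 1)
  have hD : 0 < D + 1 := by positivity
  set x := min (1 / 2) (ε / (D + 1))
  have hx0 : 0 < x := lt_min one_half_pos (by positivity)
  have hx : x ≤ 1 / 2 := min_le_left _ _
  have hDx : D * x ≤ ε := by
    calc D * x ≤ (D + 1) * (ε / (D + 1)) :=
        mul_le_mul (by linarith) (min_le_right _ _) hx0.le hD.le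
      _ = ε := by field_simp
  set P := geomInterp ρ x m
  refine ⟨fun k ↦ P.coeff (k + 1), fun k ↦ ((k : ℕ) + 1 : ℝ) * -Real.log x,
    fun k ↦ mul_pos (by positivity) (neg_pos.mpr (Real.log_neg hx0 (by linarith))), ?_⟩
  have hsum : ∀ s : ℕ, ∑ k : Fin m, P.coeff (k + 1) *
      Real.exp (-(((k : ℕ) + 1 : ℝ) * -Real.log x) * s) = P.eval (x ^ s) := fun s ↦ by
    rw [sum_coeff_mul_exp_eq_eval (natDegree_geomInterp_le ρ hx0 (by linarith) m)
      (coeff_geomInterp_zero ρ x m), neg_neg, Real.exp_log hx0]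
  simp only [hsum]
  calc _ ≤ C₀ * r ^ m / (1 - r) + D * x := tsum_abs_sub_eval_geomInterp_le hρ hr0 hr1 hx0 hx m
    _ ≤ C₀ * r ^ m / (1 - r) + ε := by gcongr

/-- an exponentially decaying kernel `ρ` (`|ρ(t)| ≤ C₀ e^{−βt}`) can be
approximated in `ℓ¹(ℕ)` by sums of `m` decaying exponentials at rate `C / mⁿ`,
for every `1 ≤ n ≤ ⌊99β⌋`. -/
theorem stmt2 (ρ : ℕ → ℝ) (C₀ β : ℝ) (hC₀ : 0 < C₀) (hβ : 0 < β)
    (hρ : ∀ t : ℕ, |ρ t| ≤ C₀ * Real.exp (-β * (t : ℝ))) :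
    ∀ n : ℕ, 1 ≤ n → (n : ℤ) ≤ ⌊99 * β⌋ →
      ∃ C : ℝ, 0 < C ∧
        ∀ m : ℕ, 0 < m →
          ∃ α b : Fin m → ℝ, (∀ k, 0 < b k) ∧
            (∑' s : ℕ, |ρ s - ∑ k, α k * Real.exp (-(b k) * (s : ℝ))|)
              ≤ C / (m : ℝ) ^ n := by
  intro n _ _
  set r := Real.exp (-β)
  have hr0 : 0 < r := Real.exp_pos _
  have hr1 : r < 1 := Real.exp_lt_one_iff.mpr (neg_lt_zero.mpr hβ)
  have hρr : ∀ s : ℕ, |ρ s| ≤ C₀ * r ^ s := fun s ↦ by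
    rw [← Real.exp_nat_mul]; convert hρ s using 3; ring
  obtain ⟨B, hB⟩ := (tendsto_pow_const_mul_const_pow_of_abs_lt_one n
    (by rwa [abs_of_pos hr0])).bddAbove_range
  have hB0 : 0 ≤ B := (by positivity : (0 : ℝ) ≤ (0 : ℕ) ^ n * r ^ 0).trans (hB ⟨0, rfl⟩)
  refine ⟨C₀ * (B / (1 - r) + 1), by positivity, fun m hm ↦ ?_⟩
  have hmn : (0 : ℝ) < (m : ℝ) ^ n := by positivity
  obtain ⟨α, b, hb, herr⟩ := exists_expSum_tsum_abs_sub_le hρr hr0.le hr1 m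
    (div_pos hC₀ hmn)
  refine ⟨α, b, hb, herr.trans ?_⟩
  calc C₀ * r ^ m / (1 - r) + C₀ / m ^ n = C₀ * ((m ^ n * r ^ m) / (1 - r) + 1) / m ^ n := by
        field_simp
    _ ≤ C₀ * (B / (1 - r) + 1) / m ^ n := by gcongr; exact hB ⟨m, rfl⟩
end

section
/- For every positive integer n there exists a constant C > 0, depending only on n, with the following property: for every positive integer T and every positive integer m there exist real coefficients α₁,…,α_m and exponents β₁,…,β_m with β_k > 1 for every k ∈ {1,…,m}, such that ∑_{s=1}^{∞} | 𝟙{s = T} − ∑_{k=1}^{m} α_k s^{−β_k} | ≤ C · T^{1.01(n+1)} / mⁿ. -/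
/-!
For `m < T` the zero approximation already has error `1 ≤ T ^ (1.01 (n + 1)) / m ^ n`. For
`T ≤ m` the error can be made arbitrarily small. In the variable `y = (T / s) ^ b`, the sums
`∑_{k=1}^m αₖ s ^ (-b k)` are exactly the polynomials `P y` of degree `≤ m` without constant
term. Take `P = c · y · ∏_{j < T} (y - (T / j) ^ b)` normalised by `P 1 = 1`: it reproduces the
indicator exactly at `s ≤ T`. For large `b` the nodes `(T / j) ^ b` are `≥ 2`, which gives
`|P y| ≤ 2 ^ T y` on `[0, 1]`, and for `s > T` we have
`y ≤ (T / (T + 1)) ^ (b - 2) · T ^ 2 / s ^ 2`, whose sum over `s` tends to `0` as `b → ∞`.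
-/

open Polynomial Filter Topology Finset

noncomputable def powerLawError {m : ℕ} (T : ℕ) (α β : Fin m → ℝ) : ℝ :=
  ∑' s : ℕ, |(if s + 1 = T then (1 : ℝ) else 0) - ∑ k, α k * ((s : ℝ) + 1) ^ (-(β k))|

lemma powerLawError_zero {m T : ℕ} (hT : 0 < T) (β : Fin m → ℝ) :
    powerLawError T 0 β = 1 := by
  rw [powerLawError, tsum_eq_single (T - 1)]
  · simp [Nat.sub_add_cancel hT]
  · intro s hs
    simp [show s + 1 ≠ T by omega]

lemma pow_le_rpow_mul_succ {m T : ℕ} (hT : 0 < T) (hmT : m ≤ T) (n : ℕ) :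
    (m : ℝ) ^ n ≤ (T : ℝ) ^ (1.01 * ((n : ℝ) + 1)) := by
  have hT1 : (1 : ℝ) ≤ T := by exact_mod_cast hT
  calc (m : ℝ) ^ n ≤ (T : ℝ) ^ n := by gcongr
    _ = (T : ℝ) ^ (n : ℝ) := (Real.rpow_natCast _ _).symm
    _ ≤ (T : ℝ) ^ (1.01 * ((n : ℝ) + 1)) := by
      gcongr
      linarith [(Nat.cast_nonneg n : (0 : ℝ) ≤ n)]

lemma sum_coeff_mul_rpow_neg_eq_eval {m : ℕ} {P : ℝ[X]} (hP0 : P.coeff 0 = 0)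
    (hdeg : P.natDegree ≤ m) (a : ℝ) (b : ℕ) {y : ℝ} (hy : 0 ≤ y) :
    ∑ k : Fin m, P.coeff (k + 1) * a ^ (b * (k + 1)) * y ^ (-((b * (k + 1) : ℕ) : ℝ)) =
      P.eval ((a / y) ^ b) := by
  rw [eval_eq_sum_range' (Nat.lt_succ_of_le hdeg), sum_range_succ', hP0, zero_mul, add_zero,
    ← Fin.sum_univ_eq_sum_range]
  refine sum_congr rfl fun k _ => ?_
  rw [Real.rpow_neg hy, Real.rpow_natCast, ← pow_mul, div_pow, div_eq_mul_inv, mul_assoc]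

noncomputable def bumpPoly (S : Finset ℝ) : ℝ[X] :=
  C (∏ x ∈ S, (1 - x))⁻¹ * (X * ∏ x ∈ S, (X - C x))

namespace bumpPoly

variable {S : Finset ℝ}

lemma eval_eq (S : Finset ℝ) (y : ℝ) :
    (bumpPoly S).eval y = (∏ x ∈ S, (1 - x))⁻¹ * (y * ∏ x ∈ S, (y - x)) := by
  simp [bumpPoly, eval_prod]

lemma coeff_zero (S : Finset ℝ) : (bumpPoly S).coeff 0 = 0 := by
  simp [coeff_zero_eq_eval_zero, eval_eq]

lemma eval_of_mem {x : ℝ} (hx : x ∈ S) : (bumpPoly S).eval x = 0 := by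
  rw [eval_eq, prod_eq_zero hx (sub_self x), mul_zero, mul_zero]

lemma eval_one (hS : (1 : ℝ) ∉ S) : (bumpPoly S).eval 1 = 1 := by
  rw [eval_eq, one_mul]
  exact inv_mul_cancel₀ (prod_ne_zero_iff.mpr fun x hx h => hS (sub_eq_zero.mp h ▸ hx))

lemma natDegree_le (S : Finset ℝ) : (bumpPoly S).natDegree ≤ #S + 1 := by
  unfold bumpPoly
  refine (natDegree_C_mul_le _ _).trans ?_
  rw [natDegree_X_mul (monic_prod_X_sub_C (fun x => x) S).ne_zero,
    natDegree_finsetProd_X_sub_C_eq_card]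

lemma abs_eval_le (hS : ∀ x ∈ S, 2 ≤ x) {y : ℝ} (hy0 : 0 ≤ y) (hy1 : y ≤ 1) :
    |(bumpPoly S).eval y| ≤ 2 ^ #S * y := by
  have hpos : 0 < ∏ x ∈ S, (x - 1) := prod_pos fun x hx => by linarith [hS x hx]
  have hfactor : ∏ x ∈ S, (x - y) ≤ 2 ^ #S * ∏ x ∈ S, (x - 1) := by
    rw [← prod_const, ← prod_mul_distrib]
    exact prod_le_prod (fun x hx => by linarith [hS x hx]) fun x hx => by linarith [hS x hx]
  rw [eval_eq, abs_mul, abs_mul, abs_inv, abs_of_nonneg hy0, abs_prod, abs_prod,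
    prod_congr rfl fun x _ => abs_sub_comm 1 x, prod_congr rfl fun x _ => abs_sub_comm y x,
    prod_congr rfl fun x hx => abs_of_nonneg (by linarith [hS x hx] : (0 : ℝ) ≤ x - 1),
    prod_congr rfl fun x hx => abs_of_nonneg (by linarith [hS x hx] : (0 : ℝ) ≤ x - y),
    inv_mul_le_iff₀ hpos]
  calc y * ∏ x ∈ S, (x - y) ≤ y * (2 ^ #S * ∏ x ∈ S, (x - 1)) := by gcongr
    _ = _ := by ring

end bumpPoly

lemma div_pow_add_two_le {T s : ℕ} (hTs : T < s) (b : ℕ) :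
    ((T : ℝ) / s) ^ (b + 2) ≤ ((T : ℝ) / (T + 1)) ^ b * ((T : ℝ) ^ 2 * ((s : ℝ) ^ 2)⁻¹) := by
  have hs : (T : ℝ) + 1 ≤ s := by exact_mod_cast hTs
  rw [pow_add, ← inv_pow, ← mul_pow, ← div_eq_mul_inv]
  gcongr

lemma abs_indicator_sub_bumpPoly_eval_le {T b : ℕ} (hT : 0 < T)
    (hnodes : ∀ j ∈ Ico 1 T, (2 : ℝ) ≤ ((T : ℝ) / j) ^ (b + 2)) (s : ℕ) :
    |(if s + 1 = T then (1 : ℝ) else 0) -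
        (bumpPoly ((Ico 1 T).image fun j : ℕ => ((T : ℝ) / j) ^ (b + 2))).eval
          (((T : ℝ) / (s + 1)) ^ (b + 2))| ≤
      2 ^ T * ((T : ℝ) / (T + 1)) ^ b * ((T : ℝ) ^ 2 * (((s : ℝ) + 1) ^ 2)⁻¹) := by
  set S := (Ico 1 T).image fun j : ℕ => ((T : ℝ) / j) ^ (b + 2)
  have hS : ∀ x ∈ S, 2 ≤ x := by
    simp only [S, forall_mem_image]
    exact hnodes
  rcases lt_trichotomy (s + 1) T with hlt | rfl | hgt
  · have hmem : ((T : ℝ) / (s + 1)) ^ (b + 2) ∈ S :=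
      mem_image.mpr ⟨s + 1, mem_Ico.mpr ⟨by omega, hlt⟩, by push_cast; rfl⟩
    rw [bumpPoly.eval_of_mem hmem, if_neg hlt.ne, sub_zero, abs_zero]
    positivity
  · have h1 : ((((s + 1 : ℕ) : ℝ)) / (s + 1)) ^ (b + 2) = 1 := by
      rw [Nat.cast_succ, div_self (by positivity), one_pow]
    rw [h1, bumpPoly.eval_one fun h => by linarith [hS 1 h], if_pos rfl, sub_self, abs_zero]
    positivity
  · have hy0 : 0 ≤ ((T : ℝ) / (s + 1)) ^ (b + 2) := by positivity
    have hy1 : ((T : ℝ) / (s + 1)) ^ (b + 2) ≤ 1 :=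
      pow_le_one₀ (by positivity) (div_le_one_of_le₀ (by exact_mod_cast hgt.le) (by positivity))
    have hcard : (2 : ℝ) ^ #S ≤ 2 ^ T :=
      pow_le_pow_right₀ one_le_two (card_image_le.trans (by simp))
    have hdecay := div_pow_add_two_le (T := T) (s := s + 1) hgt b
    push_cast at hdecay
    rw [if_neg hgt.ne', zero_sub, abs_neg, mul_assoc]
    calc _ ≤ 2 ^ #S * ((T : ℝ) / (s + 1)) ^ (b + 2) := bumpPoly.abs_eval_le hS hy0 hy1
      _ ≤ _ := by gcongr

lemma exists_pow_nodes_ge_two_and_le {T : ℕ} (K : ℝ) {ε : ℝ} (hε : 0 < ε) :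
    ∃ b : ℕ, (∀ j ∈ Ico 1 T, (2 : ℝ) ≤ ((T : ℝ) / j) ^ (b + 2)) ∧
      K * ((T : ℝ) / (T + 1)) ^ b ≤ ε := by
  have hnodes : ∀ᶠ b : ℕ in atTop, ∀ j ∈ Ico 1 T, (2 : ℝ) ≤ ((T : ℝ) / j) ^ (b + 2) := by
    rw [eventually_all_finset]
    intro j hj
    obtain ⟨hj1, hjT⟩ := mem_Ico.mp hj
    have hratio : 1 < (T : ℝ) / j :=
      (one_lt_div (by exact_mod_cast hj1)).mpr (by exact_mod_cast hjT)
    exact tendsto_add_atTop_nat 2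
      ((tendsto_pow_atTop_atTop_of_one_lt hratio).eventually_ge_atTop 2)
  have hsmall : ∀ᶠ b : ℕ in atTop, K * ((T : ℝ) / (T + 1)) ^ b ≤ ε := by
    have hq : (T : ℝ) / (T + 1) < 1 := (div_lt_one (by positivity)).mpr (lt_add_one _)
    have := (tendsto_pow_atTop_nhds_zero_of_lt_one (by positivity) hq).const_mul K
    rw [mul_zero] at this
    exact this.eventually (ge_mem_nhds hε)
  exact (hnodes.and hsmall).exists

lemma exists_powerLawError_le {T m : ℕ} (hT : 0 < T) (hTm : T ≤ m) {ε : ℝ} (hε : 0 < ε) :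
    ∃ α β : Fin m → ℝ, (∀ k, 1 < β k) ∧ powerLawError T α β ≤ ε := by
  have hZ : Summable fun s : ℕ => (((s : ℝ) + 1) ^ 2)⁻¹ := by
    simpa using (summable_nat_add_iff 1).mpr (Real.summable_nat_pow_inv.mpr one_lt_two)
  set Z := ∑' s : ℕ, (((s : ℝ) + 1) ^ 2)⁻¹
  obtain ⟨b, hnodes, hsmall⟩ := exists_pow_nodes_ge_two_and_le (T := T) (2 ^ T * T ^ 2 * Z) hε
  set P := bumpPoly ((Ico 1 T).image fun j : ℕ => ((T : ℝ) / j) ^ (b + 2))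
  have hdeg : P.natDegree ≤ m :=
    (bumpPoly.natDegree_le _).trans (by grw [card_image_le, Nat.card_Ico]; omega)
  refine ⟨fun k => P.coeff (k + 1) * (T : ℝ) ^ ((b + 2) * (k + 1)),
    fun k => ((b + 2) * (k + 1) : ℕ), fun k => Nat.one_lt_cast.mpr (by nlinarith), ?_⟩
  have hbound := abs_indicator_sub_bumpPoly_eval_le hT hnodes
  have hsum (s : ℕ) := sum_coeff_mul_rpow_neg_eq_eval (P := P) (bumpPoly.coeff_zero _) hdeg
    (T : ℝ) (b + 2) (by positivity : (0 : ℝ) ≤ s + 1)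
  simp only [powerLawError, hsum]
  calc _ ≤ ∑' s : ℕ, 2 ^ T * ((T : ℝ) / (T + 1)) ^ b * ((T : ℝ) ^ 2 * (((s : ℝ) + 1) ^ 2)⁻¹) :=
        Summable.tsum_le_tsum hbound
          (.of_nonneg_of_le (fun _ => abs_nonneg _) hbound ((hZ.mul_left _).mul_left _))
          ((hZ.mul_left _).mul_left _)
    _ = 2 ^ T * T ^ 2 * Z * ((T : ℝ) / (T + 1)) ^ b := by
        rw [tsum_mul_left, tsum_mul_left]; ring
    _ ≤ ε := hsmall

/-- approximation of the indicator `𝟙{s = T}` in `ℓ¹(ℕ₊)` by sums of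
`m` power-law decays `∑ₖ αₖ s^{−βₖ}` with `βₖ > 1`, at rate `C · T^{1.01(n+1)} / mⁿ`.
(The sum over `s ≥ 1` is written as a sum over `s : ℕ` of the value at `s + 1`.) -/
theorem stmt3 :
    ∀ n : ℕ, 0 < n → ∃ C : ℝ, 0 < C ∧
      ∀ T m : ℕ, 0 < T → 0 < m →
        ∃ α β : Fin m → ℝ, (∀ k, 1 < β k) ∧
          (∑' s : ℕ, |(if s + 1 = T then (1 : ℝ) else 0) -
              ∑ k, α k * ((s : ℝ) + 1) ^ (-(β k))|)
            ≤ C * (T : ℝ) ^ (1.01 * ((n : ℝ) + 1)) / (m : ℝ) ^ n := by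
  intro n _
  refine ⟨1, one_pos, fun T m hT hm => ?_⟩
  rw [one_mul]
  rcases lt_or_ge m T with hmT | hTm
  · refine ⟨0, fun _ => 2, fun _ => one_lt_two, ?_⟩
    change powerLawError T 0 _ ≤ _
    rw [powerLawError_zero hT, one_le_div (by positivity)]
    exact pow_le_rpow_mul_succ hT hmT.le n
  · exact exists_powerLawError_le hT hTm (by positivity)
end

section
/- For every positive integer n there exists a constant C > 0, depending only on n, with the following property: for every positive integer T and every positive integer m there exist real coefficients α₁,…,α_m and exponents β₁,…,β_m with β_k > 1 for every k, such that for every integer B with 1 ≤ B ≤ T (the same coefficients working for all such B simultaneously), ∑_{s=1}^{∞} | 𝟙{s = B} − ∑_{k=1}^{m} α_k (s/B)^{−β_k} | ≤ C · T^{1.01(n+1)} / mⁿ. -/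
/-!
With `x = s / B` and `β_k = a + k ε`, the approximant `∑ₖ αₖ x^{-βₖ}` equals `x^{-a} P(x^{-ε})`
for the polynomial `P = ∑ₖ αₖ Xᵏ` of degree `< m`. Choosing `ε ≈ log 2 / log T`, the points
`y = (B/s)^ε` with `s ≠ B` lie in the band `δ ≤ |y - 1| ≤ 1` with `δ ≈ ε / T`, while `s = B`
gives `y = 1`. A rescaled Chebyshev polynomial of degree `≈ m` equals `1` at `y = 1` and is at
most `1 / cosh (m δ / 2) ≲ e^{-m δ / 2}` on the band, so the `ℓ¹` error is at most
`e^{-m δ / 2} B^a ζ(a)`, and `e^{-x} ≤ n! / xⁿ` turns this into the polynomial rate.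
-/

open Polynomial Real
open scoped Nat

theorem cosh_le_one_add_sq {x : ℝ} (hx : |x| ≤ 1) : cosh x ≤ 1 + x ^ 2 := by
  have hx2 : x ^ 2 ≤ 1 := by nlinarith [sq_abs x, abs_nonneg x]
  calc cosh x ≤ exp (x ^ 2 / 2) := cosh_le_exp_half_sq x
    _ ≤ 1 / (1 - x ^ 2 / 2) := exp_bound_div_one_sub_of_interval (by positivity) (by linarith)
    _ ≤ 1 + x ^ 2 := by
      rw [div_le_iff₀ (by linarith)]
      nlinarith [sq_nonneg x]

theorem exists_polynomial_peak {δ : ℝ} (hδ0 : 0 < δ) (hδ1 : δ ≤ 1) (r : ℕ) :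
    ∃ P : ℝ[X], P.natDegree ≤ 2 * r ∧ P.eval 1 = 1 ∧
      ∀ y, δ ≤ |y - 1| → |y - 1| ≤ 1 → |P.eval y| ≤ (cosh (r * δ))⁻¹ := by
  set c := cosh δ
  have hc : c ≤ 1 + δ ^ 2 := cosh_le_one_add_sq (by rwa [abs_of_pos hδ0])
  have hc1 : 1 ≤ c := one_le_cosh δ
  have hcr : 0 < cosh (r * δ) := cosh_pos _
  set q : ℝ[X] := C c - C (c + 1) * (X - 1) ^ 2
  have hq : ∀ y, q.eval y = c - (c + 1) * (y - 1) ^ 2 := fun y => by simp [q]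
  -- `q` maps the band `δ² ≤ (y - 1)² ≤ 1` into `[-1, 1]` and `1` to `cosh δ`.
  refine ⟨C (cosh (r * δ))⁻¹ * (Chebyshev.T ℝ r).comp q, ?_, ?_, ?_⟩
  · have hqdeg : q.natDegree ≤ 2 := by simp only [q]; compute_degree
    calc _ ≤ ((Chebyshev.T ℝ r).comp q).natDegree := natDegree_C_mul_le _ _
      _ ≤ (Chebyshev.T ℝ r).natDegree * q.natDegree := natDegree_comp_le
      _ ≤ r * 2 := by rw [Chebyshev.natDegree_T]; exact Nat.mul_le_mul (by simp) hqdeg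
      _ = 2 * r := mul_comm _ _
  · rw [eval_mul, eval_C, eval_comp, hq, sub_self, zero_pow two_ne_zero, mul_zero, sub_zero,
      Chebyshev.T_real_cosh, Int.cast_natCast]
    exact inv_mul_cancel₀ hcr.ne'
  · intro y hy1 hy2
    have hsq1 : δ ^ 2 ≤ (y - 1) ^ 2 := by nlinarith [sq_abs (y - 1)]
    have hsq2 : (y - 1) ^ 2 ≤ 1 := by nlinarith [sq_abs (y - 1), abs_nonneg (y - 1)]
    have hz : |q.eval y| ≤ 1 := by
      rw [hq, abs_le]
      constructor <;> nlinarith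
    rw [eval_mul, eval_C, eval_comp, abs_mul, abs_of_pos (inv_pos.2 hcr)]
    exact mul_le_of_le_one_right (inv_pos.2 hcr).le (Chebyshev.abs_eval_T_real_le_one _ hz)

theorem sum_coeff_mul_rpow_eq {m : ℕ} {P : ℝ[X]} (hP : P.natDegree < m) {x : ℝ} (hx : 0 < x)
    (a ε : ℝ) :
    ∑ k : Fin m, P.coeff k * x ^ (-(a + k * ε)) = x ^ (-a) * P.eval (x ^ (-ε)) := by
  rw [eval_eq_sum_range' hP, Finset.mul_sum, ← Fin.sum_univ_eq_sum_range]
  refine Finset.sum_congr rfl fun k _ => ?_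
  rw [neg_add, rpow_add hx, ← rpow_natCast, ← rpow_mul hx.le, neg_mul, mul_comm ε]
  ring

theorem abs_rpow_neg_sub_one_bounds {s B : ℕ} (hs : 1 ≤ s) (hB : 1 ≤ B) (hsB : s ≠ B) {ε : ℝ}
    (hε0 : 0 < ε) (hε1 : ε ≤ 1) (hBε : (B : ℝ) ^ ε ≤ 2) :
    ε / (B + 1) ≤ |((s : ℝ) / B) ^ (-ε) - 1| ∧ |((s : ℝ) / B) ^ (-ε) - 1| ≤ 1 := by
  have hs0 : (0 : ℝ) < s := by exact_mod_cast hs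
  have hB0 : (0 : ℝ) < B := by exact_mod_cast hB
  rw [rpow_neg (by positivity), ← inv_rpow (by positivity), inv_div]
  rcases hsB.lt_or_gt with hlt | hgt
  · have hsB' : (s : ℝ) + 1 ≤ B := by exact_mod_cast hlt
    have hlog : 1 / B ≤ log (B / s) := by
      refine le_trans ?_ (one_sub_inv_le_log_of_pos (by positivity))
      rw [inv_div, le_sub_iff_add_le, ← add_div, div_le_one hB0]
      linarith
    have hlow : 1 + ε / B ≤ ((B : ℝ) / s) ^ ε := by
      rw [rpow_def_of_pos (by positivity)]
      have : ε / B ≤ log (B / s) * ε := by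
        rw [div_eq_mul_one_div, mul_comm]; exact mul_le_mul_of_nonneg_right hlog hε0.le
      linarith [add_one_le_exp (log (B / s) * ε)]
    have hupp : ((B : ℝ) / s) ^ ε ≤ 2 :=
      le_trans (rpow_le_rpow (by positivity) (div_le_self hB0.le (by exact_mod_cast hs)) hε0.le)
        hBε
    have hεB : ε / (B + 1) ≤ ε / B := div_le_div_of_nonneg_left hε0.le hB0 (by linarith)
    rw [abs_of_nonneg (by linarith [div_nonneg hε0.le hB0.le])]
    constructor <;> linarith
  · have hsB' : (B : ℝ) + 1 ≤ s := by exact_mod_cast hgt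
    have hbern : ((B : ℝ) / (B + 1)) ^ ε ≤ 1 - ε / (B + 1) := by
      have h := rpow_one_add_le_one_add_mul_self (s := -(1 / (B + 1))) (p := ε)
        (by rw [neg_le_neg_iff, div_le_one (by positivity)]; linarith) hε0.le hε1
      convert h using 2
      · field_simp; ring
      · ring
    have hupp : ((B : ℝ) / s) ^ ε ≤ 1 - ε / (B + 1) :=
      le_trans (rpow_le_rpow (by positivity)
        (div_le_div_of_nonneg_left hB0.le (by positivity) hsB') hε0.le) hbern
    have hpos : 0 ≤ ((B : ℝ) / s) ^ ε := by positivity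
    rw [abs_of_nonpos (by linarith [div_nonneg hε0.le (by positivity : (0:ℝ) ≤ B + 1)])]
    constructor <;> linarith

theorem summable_nat_add_one_rpow_neg {a : ℝ} (ha : 1 < a) :
    Summable fun s : ℕ => ((s : ℝ) + 1) ^ (-a) := by
  have h := (summable_nat_add_iff 1).2 (summable_nat_rpow.2 (neg_lt_neg ha))
  simpa only [Nat.cast_add, Nat.cast_one] using h

theorem exists_rpow_sum_approx_indicator {a ε : ℝ} (ha : 1 < a) (hε0 : 0 < ε) (hε1 : ε ≤ 1) {T : ℕ}
    (hTε : (T : ℝ) ^ ε ≤ 2) {m : ℕ} (hm : 0 < m) :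
    ∃ α β : Fin m → ℝ, (∀ k, 1 < β k) ∧ ∀ B : ℕ, 1 ≤ B → B ≤ T →
      (∑' s : ℕ, |(if s + 1 = B then (1 : ℝ) else 0) -
          ∑ k, α k * (((s : ℝ) + 1) / B) ^ (-(β k))|)
        ≤ (cosh (((m - 1) / 2 : ℕ) * (ε / (T + 1))))⁻¹ * T ^ a *
          ∑' s : ℕ, ((s : ℝ) + 1) ^ (-a) := by
  set δ := ε / ((T : ℝ) + 1)
  set M := (cosh (((m - 1) / 2 : ℕ) * δ))⁻¹
  have hδ0 : 0 < δ := by positivity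
  have hδ1 : δ ≤ 1 := div_le_one_of_le₀ (by linarith [(T.cast_nonneg : (0 : ℝ) ≤ T)])
    (by positivity)
  obtain ⟨P, hPdeg, hP1, hPband⟩ := exists_polynomial_peak hδ0 hδ1 ((m - 1) / 2)
  refine ⟨fun k => P.coeff k, fun k => a + k * ε,
    fun k => by nlinarith [k.val.cast_nonneg (α := ℝ)], ?_⟩
  intro B hB hBT
  have hB0 : (0 : ℝ) < B := by exact_mod_cast hB
  have hBT' : (B : ℝ) ≤ T := by exact_mod_cast hBT
  have hpt : ∀ s : ℕ, |(if s + 1 = B then (1 : ℝ) else 0) -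
      ∑ k : Fin m, P.coeff k * (((s : ℝ) + 1) / B) ^ (-(a + k * ε))|
        ≤ M * T ^ a * ((s : ℝ) + 1) ^ (-a) := by
    intro s
    have hx : (0 : ℝ) < ((s : ℝ) + 1) / B := by positivity
    rw [sum_coeff_mul_rpow_eq (by omega) hx]
    by_cases hsB : s + 1 = B
    · have hx1 : ((s : ℝ) + 1) / B = 1 := by
        rw [div_eq_one_iff_eq hB0.ne']; exact_mod_cast hsB
      rw [if_pos hsB, hx1, one_rpow, one_rpow, hP1, one_mul, sub_self, abs_zero]
      positivity
    · obtain ⟨hlow, hupp⟩ := abs_rpow_neg_sub_one_bounds (s := s + 1) (by omega) hB hsB hε0 hε1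
        ((rpow_le_rpow hB0.le hBT' hε0.le).trans hTε)
      push_cast at hlow hupp
      have hδB : δ ≤ ε / (B + 1) :=
        div_le_div_of_nonneg_left hε0.le (by positivity) (by linarith)
      rw [if_neg hsB, zero_sub, abs_neg, abs_mul, abs_of_pos (rpow_pos_of_pos hx _),
        div_rpow (by positivity) hB0.le, rpow_neg hB0.le, div_inv_eq_mul]
      calc ((s : ℝ) + 1) ^ (-a) * B ^ a * |P.eval ((((s : ℝ) + 1) / B) ^ (-ε))|
          ≤ ((s : ℝ) + 1) ^ (-a) * T ^ a * M := by
            gcongr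
            exact hPband _ (hδB.trans hlow) hupp
        _ = M * T ^ a * ((s : ℝ) + 1) ^ (-a) := by ring
  have hsum := (summable_nat_add_one_rpow_neg ha).mul_left (M * T ^ a)
  calc _ ≤ ∑' s : ℕ, M * T ^ a * ((s : ℝ) + 1) ^ (-a) :=
        (hsum.of_nonneg_of_le (fun _ => abs_nonneg _) hpt).tsum_le_tsum hpt hsum
    _ = _ := tsum_mul_left

theorem inv_cosh_le_two_mul_exp_neg (x : ℝ) : (cosh x)⁻¹ ≤ 2 * exp (-x) := by
  rw [inv_le_iff_one_le_mul₀ (cosh_pos x), cosh_eq, exp_neg]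
  have := exp_pos x
  field_simp
  nlinarith [inv_pos.2 this, exp_pos (-x)]

theorem exp_neg_le_factorial_div_pow {x : ℝ} (hx : 0 < x) (n : ℕ) :
    exp (-x) ≤ n ! / x ^ n := by
  rw [exp_neg, inv_le_comm₀ (exp_pos x) (by positivity), inv_div]
  exact pow_div_factorial_le_exp _ hx.le n

theorem inv_cosh_half_mul_le {m : ℕ} (hm : 0 < m) {δ : ℝ} (hδ0 : 0 < δ) (hδ1 : δ ≤ 1)
    (n : ℕ) :
    (cosh (((m - 1) / 2 : ℕ) * δ))⁻¹ ≤ 2 * exp 1 * n ! * (2 / δ) ^ n / m ^ n := by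
  have hr : (m : ℝ) ≤ 2 * ((m - 1) / 2 : ℕ) + 2 := by
    exact_mod_cast (by omega : m ≤ 2 * ((m - 1) / 2) + 2)
  have hmδ : 0 < (m : ℝ) * δ / 2 := by positivity
  calc (cosh (((m - 1) / 2 : ℕ) * δ))⁻¹ ≤ 2 * exp (-(((m - 1) / 2 : ℕ) * δ)) :=
        inv_cosh_le_two_mul_exp_neg _
    _ ≤ 2 * (exp 1 * exp (-(m * δ / 2))) := by
        rw [← exp_add]; gcongr; nlinarith
    _ ≤ 2 * (exp 1 * (n ! / (m * δ / 2) ^ n)) := by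
        gcongr; exact exp_neg_le_factorial_div_pow hmδ n
    _ = 2 * exp 1 * n ! * (2 / δ) ^ n / m ^ n := by
        rw [show (m : ℝ) * δ / 2 = m * (δ / 2) by ring, mul_pow, ← inv_div δ, inv_pow]
        field_simp

theorem exists_exponent_rpow_le_two {a : ℝ} (ha : 1 < a) {T : ℕ} (hT : 0 < T) :
    ∃ ε : ℝ, 0 < ε ∧ ε ≤ 1 ∧ (T : ℝ) ^ ε ≤ 2 ∧
      ((T : ℝ) + 1) / ε ≤ 2 ^ a / ((a - 1) * log 2) * T ^ a := by
  have hT1 : (1 : ℝ) ≤ T := by exact_mod_cast hT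
  have hlog2 : 0 < log 2 := log_pos one_lt_two
  have hlog : log 2 ≤ log ((T : ℝ) + 1) := log_le_log two_pos (by linarith)
  have hlogT : 0 < log ((T : ℝ) + 1) := hlog2.trans_le hlog
  refine ⟨log 2 / log (T + 1), by positivity, (div_le_one hlogT).2 hlog, ?_, ?_⟩
  · calc (T : ℝ) ^ (log 2 / log (T + 1)) ≤ ((T : ℝ) + 1) ^ (log 2 / log (T + 1)) :=
          rpow_le_rpow (by positivity) (by linarith) (by positivity)
      _ = 2 := by
          rw [rpow_def_of_pos (by positivity), mul_div_cancel₀ _ hlogT.ne', exp_log two_pos]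
  · have hloga : log ((T : ℝ) + 1) ≤ ((T : ℝ) + 1) ^ (a - 1) / (a - 1) :=
      log_le_rpow_div (by positivity) (by linarith)
    calc ((T : ℝ) + 1) / (log 2 / log (T + 1)) = (T + 1) * log (T + 1) / log 2 := by
          field_simp
      _ ≤ (T + 1) * (((T : ℝ) + 1) ^ (a - 1) / (a - 1)) / log 2 := by gcongr
      _ = ((T : ℝ) + 1) ^ a / ((a - 1) * log 2) := by
          rw [rpow_sub (by positivity), rpow_one]; field_simp
      _ ≤ (2 * T) ^ a / ((a - 1) * log 2) := by
          gcongr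
          linarith
      _ = 2 ^ a / ((a - 1) * log 2) * T ^ a := by
          rw [mul_rpow zero_le_two (by positivity)]; ring

theorem exists_rpow_sum_approx_indicator_rate {a : ℝ} (ha : 1 < a) (n : ℕ) :
    ∃ C : ℝ, 0 < C ∧ ∀ T m : ℕ, 0 < T → 0 < m →
      ∃ α β : Fin m → ℝ, (∀ k, 1 < β k) ∧ ∀ B : ℕ, 1 ≤ B → B ≤ T →
        (∑' s : ℕ, |(if s + 1 = B then (1 : ℝ) else 0) -
            ∑ k, α k * (((s : ℝ) + 1) / B) ^ (-(β k))|)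
          ≤ C * (T : ℝ) ^ (a * ((n : ℝ) + 1)) / (m : ℝ) ^ n := by
  set K := 2 ^ a / ((a - 1) * log 2)
  set Z := ∑' s : ℕ, ((s : ℝ) + 1) ^ (-a)
  have hK : 0 < K := div_pos (by positivity) (mul_pos (by linarith) (log_pos one_lt_two))
  have hZ : 0 < Z := (summable_nat_add_one_rpow_neg ha).tsum_pos (fun _ => by positivity) 0
    (by positivity)
  refine ⟨2 * exp 1 * n ! * (2 * K) ^ n * Z, by positivity, fun T m hT hm => ?_⟩
  obtain ⟨ε, hε0, hε1, hTε, hεK⟩ := exists_exponent_rpow_le_two ha hT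
  obtain ⟨α, β, hβ, happrox⟩ := exists_rpow_sum_approx_indicator ha hε0 hε1 hTε hm
  refine ⟨α, β, hβ, fun B hB hBT => (happrox B hB hBT).trans ?_⟩
  have hT0 : (0 : ℝ) < T := by exact_mod_cast hT
  have hδ : 2 / (ε / (T + 1)) ≤ 2 * K * T ^ a := by
    rw [div_div_eq_mul_div, mul_div_assoc, mul_assoc]; gcongr
  calc (cosh (((m - 1) / 2 : ℕ) * (ε / (T + 1))))⁻¹ * T ^ a * Z
      ≤ 2 * exp 1 * n ! * (2 / (ε / (T + 1))) ^ n / m ^ n * T ^ a * Z := by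
        gcongr
        exact inv_cosh_half_mul_le hm (by positivity)
          (div_le_one_of_le₀ (by linarith) (by positivity)) n
    _ ≤ 2 * exp 1 * n ! * (2 * K * T ^ a) ^ n / m ^ n * T ^ a * Z := by gcongr
    _ = 2 * exp 1 * n ! * (2 * K) ^ n * Z * (T : ℝ) ^ (a * ((n : ℝ) + 1)) / (m : ℝ) ^ n := by
        rw [rpow_mul hT0.le, show (n : ℝ) + 1 = ((n + 1 : ℕ) : ℝ) by push_cast; ring,
          rpow_natCast, pow_succ, mul_pow]
        ring

/-- approximation of rescaled indicators `𝟙{s = B}` in `ℓ¹(ℕ₊)` by rescaled sums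
of `m` power-law decays `∑ₖ αₖ (s/B)^{−βₖ}` with `βₖ > 1`, with coefficients independent of
`B`, uniformly over `1 ≤ B ≤ T`, at rate `C · T^{1.01(n+1)} / mⁿ`.
(The sum over `s ≥ 1` is written as a sum over `s : ℕ` of the value at `s + 1`.) -/
theorem stmt4 :
    ∀ n : ℕ, 0 < n → ∃ C : ℝ, 0 < C ∧
      ∀ T m : ℕ, 0 < T → 0 < m →
        ∃ α β : Fin m → ℝ, (∀ k, 1 < β k) ∧
          ∀ B : ℕ, 1 ≤ B → B ≤ T →
            (∑' s : ℕ, |(if s + 1 = B then (1 : ℝ) else 0) -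
                ∑ k, α k * (((s : ℝ) + 1) / (B : ℝ)) ^ (-(β k))|)
              ≤ C * (T : ℝ) ^ (1.01 * ((n : ℝ) + 1)) / (m : ℝ) ^ n :=
  fun n _ => exists_rpow_sum_approx_indicator_rate (by norm_num) n
end

section
/- Let ρ : ℕ₊ → ℝ be polynomially decaying, i.e. there exist constants C₀ > 0 and β > 1 such that |ρ(t)| ≤ C₀ t^{−β} for all positive integers t. Then for every integer n with 1 ≤ n ≤ ⌊0.99β⌋ − 1 there exists a constant C > 0 (depending on ρ, β and n) such that for every positive integer m there exist real coefficients α₁,…,α_m and exponents β₁,…,β_m with β_k > 1 for every k, such that ∑_{s=1}^{∞} | ρ(s) − ∑_{k=1}^{m} α_k s^{−β_k} | ≤ C / mⁿ. -/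
/-!
Put `x = (s + 1)^(-c)`. A sum `∑_{k < m} α_k (s + 1)^(-c (k + 1))` is then `x q(x)` for a
polynomial `q` of degree `< m`, and we take for `q` the Lagrange interpolant that makes `x q(x)`
equal to `ρ (s + 1)` at the `m` nodes `x_s`, `s < m`. Only the tail `s ≥ m` contributes to the
`ℓ¹` error. Consecutive nodes have ratio at most `θ = (m / (m + 1))^c`, so for `c` large they are
so well separated that every Lagrange basis polynomial is bounded by `2` on `[0, x_m]`; hence
`|x q(x)| ≤ 2 m C₀ m^c x` there, whose tail sum is at most `2 C₀ (m + 1)^2 θ`. The tail of `ρ`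
itself is at most `C₀ m^(1-β) ≤ C₀ m^(-n)` because `n + 1 ≤ β`, and choosing `c` with
`θ ≤ 1 / (2 (m + 1)^(n + 2))` bounds the interpolation error by `C₀ m^(-n)` as well.
-/

open Finset Polynomial

namespace Lagrange

variable {𝕜 ι : Type*} [NormedField 𝕜] [DecidableEq ι] {s : Finset ι} {v : ι → 𝕜} {u : 𝕜}
  {κ : ℝ}

theorem norm_eval_basis_le {j : ι} (hκ : 0 ≤ κ)
    (h : ∀ i ∈ s.erase j, ‖u - v i‖ ≤ κ * ‖v j - v i‖) :
    ‖(Lagrange.basis s v j).eval u‖ ≤ κ ^ #(s.erase j) := by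
  rw [Lagrange.basis, eval_prod, norm_prod, ← prod_const]
  refine prod_le_prod (fun _ _ => norm_nonneg _) fun i hi => ?_
  rw [Lagrange.basisDivisor, eval_mul, eval_C, eval_sub, eval_X, eval_C, norm_mul, norm_inv,
    inv_mul_eq_div]
  exact div_le_of_le_mul₀ (norm_nonneg _) hκ (h i hi)

theorem norm_eval_interpolate_le {r : ι → 𝕜} {R : ℝ} (hκ : 0 ≤ κ)
    (h : ∀ j ∈ s, ∀ i ∈ s.erase j, ‖u - v i‖ ≤ κ * ‖v j - v i‖) (hr : ∀ j ∈ s, ‖r j‖ ≤ R) :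
    ‖(interpolate s v r).eval u‖ ≤ #s * (R * κ ^ (#s - 1)) := by
  rw [interpolate_apply, eval_finsetSum, ← nsmul_eq_mul, ← sum_const]
  refine (norm_sum_le _ _).trans (sum_le_sum fun j hj => ?_)
  rw [eval_mul, eval_C, norm_mul, ← card_erase_of_mem hj]
  exact mul_le_mul (hr j hj) (norm_eval_basis_le hκ (h j hj)) (norm_nonneg _)
    ((norm_nonneg _).trans (hr j hj))

end Lagrange

theorem tsum_le_tsum_of_eq_zero_of_le_nat_add {f g : ℕ → ℝ} {m : ℕ} (hf : ∀ s, 0 ≤ f s)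
    (hf0 : ∀ s < m, f s = 0) (hfg : ∀ s, f (s + m) ≤ g s) (hg : Summable g) :
    ∑' s, f s ≤ ∑' s, g s := by
  have hshift : Summable fun s => f (s + m) := hg.of_nonneg_of_le (fun s => hf _) hfg
  rw [← hshift.sum_add_tsum_nat_add', sum_eq_zero fun s hs => hf0 s (mem_range.1 hs), zero_add]
  exact hshift.tsum_le_tsum hfg hg

theorem summable_rpow_neg_add_nat {a : ℝ} (ha : 1 < a) (m : ℕ) :
    Summable fun s : ℕ => ((s : ℝ) + m + 1) ^ (-a) := by
  have := (summable_nat_add_iff (m + 1)).2 (Real.summable_nat_rpow.2 (neg_lt_neg ha))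
  simpa only [Nat.cast_add, Nat.cast_one, add_assoc] using this

theorem rpow_neg_le_mul_inv_sub_inv {a x : ℝ} {m : ℕ} (ha : 2 ≤ a) (hm : 0 < m) (hx : m ≤ x) :
    (x + 1) ^ (-a) ≤ ((m : ℝ) + 1) ^ (2 - a) * (x⁻¹ - (x + 1)⁻¹) := by
  have hm' : (0 : ℝ) < m := Nat.cast_pos.2 hm
  have hx0 : 0 < x := hm'.trans_le hx
  have hsplit : (x + 1) ^ (-a) = (x + 1) ^ (2 - a) * ((x + 1) ^ 2)⁻¹ := by
    rw [← Real.rpow_natCast, ← Real.rpow_neg (by positivity), ← Real.rpow_add (by positivity)]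
    congr 1
    ring
  have htel : x⁻¹ - (x + 1)⁻¹ = (x * (x + 1))⁻¹ := by field_simp; ring
  rw [hsplit, htel]
  exact mul_le_mul (Real.rpow_le_rpow_of_nonpos (by positivity) (by linarith) (by linarith))
    (inv_anti₀ (by positivity) (by nlinarith)) (by positivity) (by positivity)

theorem tsum_rpow_neg_add_nat_le {a : ℝ} (ha : 2 ≤ a) {m : ℕ} (hm : 0 < m) :
    ∑' s : ℕ, ((s : ℝ) + m + 1) ^ (-a) ≤ ((m : ℝ) + 1) ^ (2 - a) / m := by
  refine Real.tsum_le_of_sum_range_le (fun s => by positivity) fun N => ?_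
  have htel : ∑ s ∈ range N, (((s : ℝ) + m)⁻¹ - ((s : ℝ) + m + 1)⁻¹)
      = (m : ℝ)⁻¹ - ((N : ℝ) + m)⁻¹ := by
    simpa [add_right_comm] using sum_range_sub' (fun s : ℕ => ((s : ℝ) + m)⁻¹) N
  calc ∑ s ∈ range N, ((s : ℝ) + m + 1) ^ (-a)
      ≤ ∑ s ∈ range N, ((m : ℝ) + 1) ^ (2 - a) * (((s : ℝ) + m)⁻¹ - ((s : ℝ) + m + 1)⁻¹) :=
        sum_le_sum fun s _ =>
          rpow_neg_le_mul_inv_sub_inv ha hm (le_add_of_nonneg_left s.cast_nonneg)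
    _ ≤ ((m : ℝ) + 1) ^ (2 - a) / m := by
        rw [← mul_sum, htel, div_eq_mul_inv]
        gcongr
        exact sub_le_self _ (by positivity)

theorem inv_one_sub_pow_le_two {θ : ℝ} {k : ℕ} (hθ : θ ≤ 2) (hkθ : k * θ ≤ 1 / 2) :
    (1 - θ)⁻¹ ^ k ≤ 2 := by
  have hpow : 1 / 2 ≤ (1 - θ) ^ k := by
    have := one_add_mul_le_pow (a := -θ) (by linarith) k
    rw [← sub_eq_add_neg, mul_neg] at this
    linarith
  rw [inv_pow]
  calc ((1 - θ) ^ k)⁻¹ ≤ (1 / 2)⁻¹ := inv_anti₀ (by norm_num) hpow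
    _ = 2 := by norm_num

theorem add_one_rpow_two_sub_div_le {x β : ℝ} {n : ℕ} (hx : 1 ≤ x) (hβ : 2 ≤ β)
    (hnβ : n + 1 ≤ β) : (x + 1) ^ (2 - β) / x ≤ (x ^ n)⁻¹ :=
  calc (x + 1) ^ (2 - β) / x ≤ x ^ (2 - β) / x :=
        div_le_div_of_nonneg_right
          (Real.rpow_le_rpow_of_nonpos (by linarith) (by linarith) (by linarith)) (by linarith)
    _ = x ^ (1 - β) := by rw [← Real.rpow_sub_one (by positivity)]; ring_nf
    _ ≤ x ^ (-(n : ℝ)) := Real.rpow_le_rpow_of_exponent_le hx (by linarith)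
    _ = (x ^ n)⁻¹ := by rw [Real.rpow_neg (by positivity), Real.rpow_natCast]

theorem sum_coeff_mul_rpow_eq_s5 {m : ℕ} {q : ℝ[X]} (hq : q.natDegree < m) (c : ℕ) {x : ℝ}
    (hx : 0 < x) :
    ∑ k : Fin m, q.coeff k * x ^ (-((c : ℝ) * ((k : ℕ) + 1)))
      = (x⁻¹) ^ c * q.eval ((x⁻¹) ^ c) := by
  rw [eval_eq_sum_range' hq, mul_sum, ← Fin.sum_univ_eq_sum_range]
  refine sum_congr rfl fun k _ => ?_
  rw [← Nat.cast_succ, ← Nat.cast_mul, Real.rpow_neg hx.le, Real.rpow_natCast, ← inv_pow, pow_mul,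
    pow_succ]
  ring

namespace PowerLawApprox

noncomputable def node (c s : ℕ) : ℝ := (((s : ℝ) + 1)⁻¹) ^ c

variable {c m : ℕ}

theorem node_pos (s : ℕ) : 0 < node c s := by unfold node; positivity

theorem node_eq_rpow (s : ℕ) : node c s = ((s : ℝ) + 1) ^ (-(c : ℝ)) := by
  rw [node, Real.rpow_neg (by positivity), Real.rpow_natCast, inv_pow]

theorem node_antitone : Antitone (node c) := fun s t hst => by
  unfold node
  gcongr

theorem node_strictAnti (hc : c ≠ 0) : StrictAnti (node c) := fun s t hst => by
  unfold node
  gcongr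

noncomputable def nodeRatio (c m : ℕ) : ℝ := ((m : ℝ) / (m + 1)) ^ c

theorem nodeRatio_nonneg : 0 ≤ nodeRatio c m := by unfold nodeRatio; positivity

theorem nodeRatio_lt_one (hc : c ≠ 0) : nodeRatio c m < 1 :=
  pow_lt_one₀ (by positivity) ((div_lt_one (by positivity)).2 (by linarith)) hc

theorem nodeRatio_le_one : nodeRatio c m ≤ 1 :=
  pow_le_one₀ (by positivity) (div_le_one_of_le₀ (by linarith) (by positivity))

theorem node_le_nodeRatio_mul {i j : ℕ} (hij : i < j) (hjm : j ≤ m) :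
    node c j ≤ nodeRatio c m * node c i := by
  rw [node, node, nodeRatio, ← mul_pow]
  gcongr
  field_simp
  norm_cast
  nlinarith

theorem mul_node_le_abs_sub {i j : ℕ} (hi : i ≤ m) (hj : j ≤ m) (hij : i ≠ j) :
    (1 - nodeRatio c m) * node c i ≤ |node c j - node c i| := by
  rcases hij.lt_or_gt with hij | hji
  · have := node_le_nodeRatio_mul (c := c) hij hj
    rw [abs_sub_comm]
    linarith [le_abs_self (node c i - node c j)]
  · have := node_le_nodeRatio_mul (c := c) hji hi
    have := node_antitone (c := c) hji.le
    nlinarith [le_abs_self (node c j - node c i), nodeRatio_le_one (c := c) (m := m)]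

theorem abs_sub_node_le {i j : ℕ} {u : ℝ} (hc : c ≠ 0) (hu0 : 0 ≤ u) (hu : u ≤ node c m)
    (hi : i ≤ m) (hj : j ≤ m) (hij : i ≠ j) :
    |u - node c i| ≤ (1 - nodeRatio c m)⁻¹ * |node c j - node c i| := by
  have hθ : 0 < 1 - nodeRatio c m := sub_pos.2 (nodeRatio_lt_one hc)
  have hui : u ≤ node c i := hu.trans (node_antitone hi)
  calc |u - node c i| ≤ node c i := abs_le.2 ⟨by linarith, by linarith⟩
    _ = (1 - nodeRatio c m)⁻¹ * ((1 - nodeRatio c m) * node c i) := by field_simp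
    _ ≤ _ := by gcongr; exact mul_node_le_abs_sub hi hj hij

/-- The factor `(s + 1)^c` in the data is cancelled by the factor `x = node c s` in `approx`. -/
noncomputable def interp (c m : ℕ) (ρ : ℕ → ℝ) : ℝ[X] :=
  Lagrange.interpolate (range m) (node c) fun s => ρ (s + 1) * ((s : ℝ) + 1) ^ c

/-- By `sum_coeff_interp_mul_rpow_eq_approx`, this is the power-law sum
`∑_{k < m} (interp c m ρ).coeff k * (s + 1)^(-c (k + 1))`. -/
noncomputable def approx (c m : ℕ) (ρ : ℕ → ℝ) (s : ℕ) : ℝ :=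
  node c s * (interp c m ρ).eval (node c s)

variable {ρ : ℕ → ℝ}

theorem natDegree_interp_lt (hc : c ≠ 0) (hm : 0 < m) : (interp c m ρ).natDegree < m := by
  by_cases h0 : interp c m ρ = 0
  · simpa [h0] using hm
  · rw [natDegree_lt_iff_degree_lt h0]
    have := Lagrange.degree_interpolate_lt (s := range m) (fun s => ρ (s + 1) * ((s : ℝ) + 1) ^ c)
      (node_strictAnti hc).injective.injOn
    rwa [card_range] at this

theorem approx_eq_of_lt (hc : c ≠ 0) {s : ℕ} (hs : s < m) : approx c m ρ s = ρ (s + 1) := by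
  rw [approx, interp, Lagrange.eval_interpolate_at_node _ (node_strictAnti hc).injective.injOn
    (mem_range.2 hs), node, ← mul_assoc, mul_comm, ← mul_assoc, ← mul_pow,
    mul_inv_cancel₀ (by positivity), one_pow, one_mul]

theorem abs_eval_interp_node_le (hc : c ≠ 0) {C₀ : ℝ} (hC₀ : 0 ≤ C₀)
    (hρ : ∀ s < m, |ρ (s + 1)| ≤ C₀)
    (hθ : m * nodeRatio c m ≤ 1 / 2) {s : ℕ} (hs : m ≤ s) :
    |(interp c m ρ).eval (node c s)| ≤ m * (C₀ * m ^ c * 2) := by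
  have hdata : ∀ j ∈ range m, ‖ρ (j + 1) * ((j : ℝ) + 1) ^ c‖ ≤ C₀ * m ^ c := by
    intro j hj
    have hjm : (j : ℝ) + 1 ≤ m := by exact_mod_cast mem_range.1 hj
    rw [Real.norm_eq_abs, abs_mul, abs_of_pos (show (0 : ℝ) < ((j : ℝ) + 1) ^ c by positivity)]
    exact mul_le_mul (hρ j (mem_range.1 hj)) (by gcongr) (by positivity) hC₀
  have hnodes : ∀ j ∈ range m, ∀ i ∈ (range m).erase j,
      ‖node c s - node c i‖ ≤ (1 - nodeRatio c m)⁻¹ * ‖node c j - node c i‖ := by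
    intro j hj i hi
    exact abs_sub_node_le hc (node_pos s).le (node_antitone hs)
      (mem_range.1 (mem_of_mem_erase hi)).le (mem_range.1 hj).le (ne_of_mem_erase hi)
  refine (Lagrange.norm_eval_interpolate_le (inv_nonneg.2 (sub_pos.2 (nodeRatio_lt_one hc)).le)
    hnodes hdata).trans ?_
  rw [card_range]
  gcongr
  refine inv_one_sub_pow_le_two (nodeRatio_le_one.trans one_le_two) (le_trans ?_ hθ)
  gcongr
  · exact nodeRatio_nonneg
  · exact Nat.cast_le.2 (Nat.sub_le m 1)

variable {C₀ β : ℝ}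

theorem abs_sub_approx_le (hc : c ≠ 0) (hC₀ : 0 ≤ C₀) (hβ : 0 ≤ β)
    (hρ : ∀ t : ℕ, 1 ≤ t → |ρ t| ≤ C₀ * (t : ℝ) ^ (-β)) (hθ : m * nodeRatio c m ≤ 1 / 2)
    {s : ℕ} (hs : m ≤ s) :
    |ρ (s + 1) - approx c m ρ s|
      ≤ C₀ * ((s : ℝ) + 1) ^ (-β) + 2 * m * C₀ * m ^ c * ((s : ℝ) + 1) ^ (-(c : ℝ)) := by
  have hρs : |ρ (s + 1)| ≤ C₀ * ((s : ℝ) + 1) ^ (-β) := by exact_mod_cast hρ (s + 1) s.succ_pos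
  have hρC₀ : ∀ j < m, |ρ (j + 1)| ≤ C₀ := fun j _ => (hρ (j + 1) j.succ_pos).trans
    (mul_le_of_le_one_right hC₀ (Real.rpow_le_one_of_one_le_of_nonpos (by simp) (by linarith)))
  have hq := abs_eval_interp_node_le hc hC₀ hρC₀ hθ hs
  calc |ρ (s + 1) - approx c m ρ s|
      ≤ |ρ (s + 1)| + node c s * |(interp c m ρ).eval (node c s)| := by
        rw [approx, ← abs_of_pos (node_pos (c := c) s), ← abs_mul, abs_of_pos (node_pos s)]
        exact abs_sub _ _
    _ ≤ C₀ * ((s : ℝ) + 1) ^ (-β) + node c s * (m * (C₀ * m ^ c * 2)) := by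
        gcongr
        exact (node_pos s).le
    _ = _ := by rw [node_eq_rpow]; ring

theorem tsum_abs_sub_approx_le (hc : 2 ≤ c) (hm : 0 < m) (hC₀ : 0 ≤ C₀)
    (hβ : 2 ≤ β) (hρ : ∀ t : ℕ, 1 ≤ t → |ρ t| ≤ C₀ * (t : ℝ) ^ (-β))
    (hθ : m * nodeRatio c m ≤ 1 / 2) :
    ∑' s, |ρ (s + 1) - approx c m ρ s|
      ≤ C₀ * ((m : ℝ) + 1) ^ (2 - β) / m + 2 * C₀ * ((m : ℝ) + 1) ^ 2 * nodeRatio c m := by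
  have hc' : (2 : ℝ) ≤ c := by exact_mod_cast hc
  set B : ℝ := 2 * m * C₀ * m ^ c
  have hB : 0 ≤ B := by positivity
  have hsumβ := summable_rpow_neg_add_nat (by linarith : 1 < β) m
  have hsumc := summable_rpow_neg_add_nat (by linarith : 1 < (c : ℝ)) m
  calc ∑' s, |ρ (s + 1) - approx c m ρ s|
      ≤ ∑' s : ℕ, (C₀ * ((s : ℝ) + m + 1) ^ (-β) + B * ((s : ℝ) + m + 1) ^ (-(c : ℝ))) := by
        refine tsum_le_tsum_of_eq_zero_of_le_nat_add (m := m) (fun s => abs_nonneg _)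
          (fun s hs => ?_) (fun s => ?_)
          ((hsumβ.mul_left C₀).add (hsumc.mul_left B))
        · rw [approx_eq_of_lt (by omega) hs, sub_self, abs_zero]
        · have := abs_sub_approx_le (ρ := ρ) (by omega) hC₀ (by linarith) hρ hθ
            (Nat.le_add_left m s)
          push_cast at this
          exact this
    _ = C₀ * ∑' s : ℕ, ((s : ℝ) + m + 1) ^ (-β)
          + B * ∑' s : ℕ, ((s : ℝ) + m + 1) ^ (-(c : ℝ)) := by
        rw [(hsumβ.mul_left C₀).tsum_add (hsumc.mul_left B), tsum_mul_left, tsum_mul_left]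
    _ ≤ C₀ * (((m : ℝ) + 1) ^ (2 - β) / m) + B * (((m : ℝ) + 1) ^ (2 - (c : ℝ)) / m) := by
        gcongr
        · exact tsum_rpow_neg_add_nat_le hβ hm
        · exact tsum_rpow_neg_add_nat_le hc' hm
    _ = _ := by
        rw [Real.rpow_sub (by positivity) 2 (c : ℝ), Real.rpow_two, Real.rpow_natCast, nodeRatio,
          div_pow]
        field_simp
        ring

theorem sum_coeff_interp_mul_rpow_eq_approx (hc : c ≠ 0) (hm : 0 < m) (s : ℕ) :
    ∑ k : Fin m, (interp c m ρ).coeff k * ((s : ℝ) + 1) ^ (-((c : ℝ) * ((k : ℕ) + 1)))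
      = approx c m ρ s :=
  sum_coeff_mul_rpow_eq_s5 (natDegree_interp_lt hc hm) c (by positivity)

theorem exists_nodeRatio_le (m n : ℕ) :
    ∃ c, 2 ≤ c ∧ 2 * ((m : ℝ) + 1) ^ (n + 2) * nodeRatio c m ≤ 1 := by
  obtain ⟨N, hN⟩ :=
    exists_pow_lt_of_lt_one (by positivity : 0 < 1 / (2 * ((m : ℝ) + 1) ^ (n + 2)))
      ((div_lt_one (by positivity)).2 (by linarith) : (m : ℝ) / (m + 1) < 1)
  refine ⟨N + 2, by omega, ?_⟩
  rw [← le_div_iff₀' (by positivity)]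
  exact (pow_le_pow_of_le_one (by positivity) (div_le_one_of_le₀ (by linarith) (by positivity))
    (by omega)).trans hN.le

theorem tsum_abs_sub_approx_le_div_pow {n : ℕ} (hc : 2 ≤ c) (hm : 0 < m) (hC₀ : 0 ≤ C₀)
    (hβ : 2 ≤ β) (hnβ : n + 1 ≤ β) (hρ : ∀ t : ℕ, 1 ≤ t → |ρ t| ≤ C₀ * (t : ℝ) ^ (-β))
    (hθ : 2 * ((m : ℝ) + 1) ^ (n + 2) * nodeRatio c m ≤ 1) :
    ∑' s, |ρ (s + 1) - approx c m ρ s| ≤ 2 * C₀ / (m : ℝ) ^ n := by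
  have hm1 : (1 : ℝ) ≤ m := Nat.one_le_cast.2 hm
  have hmm : (m : ℝ) ≤ ((m : ℝ) + 1) ^ (n + 2) :=
    (le_self_pow₀ (by linarith) (by omega)).trans' (by linarith)
  have hmθ : m * nodeRatio c m ≤ 1 / 2 := by
    nlinarith [nodeRatio_nonneg (c := c) (m := m)]
  have hθ' : 2 * ((m : ℝ) + 1) ^ 2 * nodeRatio c m ≤ (((m : ℝ) + 1) ^ n)⁻¹ := by
    calc 2 * ((m : ℝ) + 1) ^ 2 * nodeRatio c m
        = 2 * ((m : ℝ) + 1) ^ (n + 2) * nodeRatio c m * (((m : ℝ) + 1) ^ n)⁻¹ := by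
          field_simp
          ring
      _ ≤ (((m : ℝ) + 1) ^ n)⁻¹ := mul_le_of_le_one_left (by positivity) hθ
  calc _ ≤ C₀ * (((m : ℝ) + 1) ^ (2 - β) / m) + C₀ * (2 * ((m : ℝ) + 1) ^ 2 * nodeRatio c m) :=
        (tsum_abs_sub_approx_le hc hm hC₀ hβ hρ hmθ).trans_eq (by ring)
    _ ≤ C₀ * ((m : ℝ) ^ n)⁻¹ + C₀ * ((m : ℝ) ^ n)⁻¹ := by
        gcongr
        · exact add_one_rpow_two_sub_div_le hm1 hβ hnβ
        · exact hθ'.trans (by gcongr; linarith)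
    _ = 2 * C₀ / (m : ℝ) ^ n := by ring

end PowerLawApprox

theorem nat_add_one_le_of_le_floor_sub_one {n : ℕ} {β : ℝ} (h : (n : ℤ) ≤ ⌊0.99 * β⌋ - 1) :
    (n : ℝ) + 1 ≤ β := by
  have : ((n : ℤ) + 1 : ℝ) ≤ ⌊0.99 * β⌋ := by
    exact_mod_cast (by omega : (n : ℤ) + 1 ≤ ⌊0.99 * β⌋)
  push_cast at this
  linarith [Int.floor_le (0.99 * β)]

open PowerLawApprox in
theorem stmt5_general (ρ : ℕ → ℝ) (C₀ β : ℝ) (hC₀ : 0 < C₀)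
    (hρ : ∀ t : ℕ, 1 ≤ t → |ρ t| ≤ C₀ * (t : ℝ) ^ (-β)) :
    ∀ n : ℕ, 1 ≤ n → (n : ℤ) ≤ ⌊0.99 * β⌋ - 1 →
      ∃ C : ℝ, 0 < C ∧
        ∀ m : ℕ, 0 < m →
          ∃ α b : Fin m → ℝ, (∀ k, 1 < b k) ∧
            (∑' s : ℕ, |ρ (s + 1) - ∑ k, α k * ((s : ℝ) + 1) ^ (-(b k))|)
              ≤ C / (m : ℝ) ^ n := by
  intro n hn hfloor
  have hnβ := nat_add_one_le_of_le_floor_sub_one hfloor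
  have hβ : 2 ≤ β := by linarith [(Nat.one_le_cast (α := ℝ)).2 hn]
  refine ⟨2 * C₀, by positivity, fun m hm => ?_⟩
  obtain ⟨c, hc, hθ⟩ := exists_nodeRatio_le m n
  refine ⟨fun k => (interp c m ρ).coeff k, fun k => c * ((k : ℕ) + 1), fun k => ?_, ?_⟩
  · have : (2 : ℝ) ≤ c := by exact_mod_cast hc
    nlinarith [(k : ℕ).cast_nonneg (α := ℝ)]
  simp only [sum_coeff_interp_mul_rpow_eq_approx (ρ := ρ) (by omega : c ≠ 0) hm]
  exact tsum_abs_sub_approx_le_div_pow hc hm hC₀.le hβ hnβ hρ hθ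

/-- a polynomially decaying kernel `ρ` on the positive integers
(`|ρ(t)| ≤ C₀ t^{−β}` with `β > 1`) can be approximated in `ℓ¹(ℕ₊)` by sums of `m`
power-law decays with exponents `> 1`, at rate `C / mⁿ`, for every
`1 ≤ n ≤ ⌊0.99β⌋ − 1`.
(The sum over `s ≥ 1` is written as a sum over `s : ℕ` of the value at `s + 1`.) -/
theorem stmt5 (ρ : ℕ → ℝ) (C₀ β : ℝ) (hC₀ : 0 < C₀) (hβ : 1 < β)
    (hρ : ∀ t : ℕ, 1 ≤ t → |ρ t| ≤ C₀ * (t : ℝ) ^ (-β)) :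
    ∀ n : ℕ, 1 ≤ n → (n : ℤ) ≤ ⌊0.99 * β⌋ - 1 →
      ∃ C : ℝ, 0 < C ∧
        ∀ m : ℕ, 0 < m →
          ∃ α b : Fin m → ℝ, (∀ k, 1 < b k) ∧
            (∑' s : ℕ, |ρ (s + 1) - ∑ k, α k * ((s : ℝ) + 1) ^ (-(b k))|)
              ≤ C / (m : ℝ) ^ n :=
  stmt5_general ρ C₀ β hC₀ hρ
end

section
/- Define f* : {−1, 0, 1}³ → ℝ by f*(x₀, x₁, x₂) = −1 if x₀ = −1, f*(x₀, x₁, x₂) = x₁ if x₀ = 0, and f*(x₀, x₁, x₂) = x₂ if x₀ = 1. Then for all real numbers a₀, a₁, a₂, c there exist x₀, x₁, x₂ ∈ {−1, 0, 1} such that | f*(x₀, x₁, x₂) − (a₀ x₀ + a₁ x₁ + a₂ x₂ + c) | ≥ 2/3. In other words, the best uniform approximation of f* on {−1,0,1}³ by affine functions has error at least 2/3. -/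
/-!
Fix `x₁ = 1` and `x₂ = -1`. Along the line `x₀ ∈ {-1, 0, 1}` the target `f*` takes the values
`-1, 1, -1`, so its second difference `f*(-1) - 2 f*(0) + f*(1)` is `-4`, while the second
difference of an affine function vanishes. Hence the error has second difference `-4`, and one of
the three errors has absolute value at least `4 / 4 = 1 ≥ 2/3`.
-/

open Classical in
noncomputable def fstar (x₀ x₁ x₂ : ℝ) : ℝ :=
  if x₀ = -1 then -1 else if x₀ = 0 then x₁ else x₂

lemma abs_sub_two_mul_add_le (u v w : ℝ) : |u - 2 * v + w| ≤ |u| + 2 * |v| + |w| :=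
  calc |u - 2 * v + w| ≤ |u - 2 * v| + |w| := abs_add_le _ _
    _ ≤ |u| + |2 * v| + |w| := by gcongr; exact abs_sub _ _
    _ = |u| + 2 * |v| + |w| := by rw [abs_mul, abs_two]

lemma exists_mem_abs_secondDiff_div_four_le (e : ℝ → ℝ) :
    ∃ t ∈ ({-1, 0, 1} : Set ℝ), |e (-1) - 2 * e 0 + e 1| / 4 ≤ |e t| := by
  by_contra! h
  have hneg := h (-1) (by simp)
  have hzero := h 0 (by simp)
  have hone := h 1 (by simp)
  linarith [abs_sub_two_mul_add_le (e (-1)) (e 0) (e 1)]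

lemma fstar_secondDiff_sub_affine (a₀ b : ℝ) :
    (fstar (-1) 1 (-1) - (a₀ * -1 + b)) - 2 * (fstar 0 1 (-1) - (a₀ * 0 + b))
      + (fstar 1 1 (-1) - (a₀ * 1 + b)) = -4 := by
  norm_num [fstar]
  ring

/-- the best uniform approximation of `f*` on `{−1,0,1}³` by affine functions
`a₀x₀ + a₁x₁ + a₂x₂ + c` has error at least `2/3`. -/
theorem stmt7 (a₀ a₁ a₂ c : ℝ) :
    ∃ x₀ ∈ ({-1, 0, 1} : Set ℝ), ∃ x₁ ∈ ({-1, 0, 1} : Set ℝ), ∃ x₂ ∈ ({-1, 0, 1} : Set ℝ),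
      2 / 3 ≤ |fstar x₀ x₁ x₂ - (a₀ * x₀ + a₁ * x₁ + a₂ * x₂ + c)| := by
  obtain ⟨t, ht, hle⟩ :=
    exists_mem_abs_secondDiff_div_four_le fun t ↦ fstar t 1 (-1) - (a₀ * t + (a₁ - a₂ + c))
  rw [fstar_secondDiff_sub_affine] at hle
  refine ⟨t, ht, 1, by simp, -1, by simp, ?_⟩
  norm_num at hle
  rw [show a₀ * t + a₁ * 1 + a₂ * -1 + c = a₀ * t + (a₁ - a₂ + c) by ring]
  linarith
end

section
/- Define g : {−1, 0, 1} → {0, 1, 2} by g(x) = x + 1. For every ε > 0 there exist a positive integer m, real coefficients α₁,…,α_m, and exponents β₁,…,β_m with β_k > 0 for every k, such that for every sequence x : ℕ → {−1, 0, 1}, | ∑_{s=0}^{∞} ( ∑_{k=1}^{m} α_k e^{−β_k (s − g(x(0)))} ) · x(s) − x(g(x(0))) | ≤ ε. -/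
/-!
With rates `log A, 2 log A, 3 log A` the attention weight at position `s` is a cubic in
`u = A ^ (B - s)`, where `B = g(x(0))`; take it to be `p(u) = u (u - A) (u - A²) / ((A - 1)(A² - 1))`.
The (at most two) positions `s < B` have `u ∈ {A, A²}` and weight `0`, position `B` has `u = 1`
and weight `1`, and positions `s > B` have `u = A⁻¹ ^ (s - B)` with `|p(u)| ≤ 4u` once `A ≥ 2`.
So the error is at most the geometric tail `4 / (A - 1)`, which is `≤ ε` for `A = 4 / ε + 2`.
-/

open Real

theorem abs_tsum_mul_sub_le_of_geometric_tail {c x : ℕ → ℝ} {B : ℕ} {C q : ℝ}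
    (hq₀ : 0 ≤ q) (hq₁ : q < 1) (hx : ∀ s, |x s| ≤ 1) (hbefore : ∀ s < B, c s = 0)
    (hB : c B = 1) (htail : ∀ j, |c (j + (B + 1))| ≤ C * q ^ j) :
    |∑' s, c s * x s - x B| ≤ C / (1 - q) := by
  have hgeom : HasSum (fun j ↦ C * q ^ j) (C / (1 - q)) :=
    (hasSum_geometric_of_lt_one hq₀ hq₁).mul_left C
  have hbound : ∀ j, ‖c (j + (B + 1)) * x (j + (B + 1))‖ ≤ C * q ^ j := fun j ↦ by
    rw [Real.norm_eq_abs, abs_mul]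
    exact (mul_le_of_le_one_right (abs_nonneg _) (hx _)).trans (htail j)
  have hsummable : Summable fun s ↦ c s * x s :=
    (summable_nat_add_iff (B + 1)).mp (hgeom.summable.of_norm_bounded hbound)
  have hhead : ∑ s ∈ Finset.range (B + 1), c s * x s = x B := by
    rw [Finset.sum_range_succ, hB, one_mul, add_eq_right]
    exact Finset.sum_eq_zero fun s hs ↦ by rw [hbefore s (Finset.mem_range.mp hs), zero_mul]
  rw [← hsummable.sum_add_tsum_nat_add (B + 1), hhead, add_sub_cancel_left]
  exact tsum_of_norm_bounded hgeom hbound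

noncomputable def lagrangeCubic (A u : ℝ) : ℝ :=
  u * (u - A) * (u - A ^ 2) / ((A - 1) * (A ^ 2 - 1))

theorem lagrangeCubic_one {A : ℝ} (hA : 1 < A) : lagrangeCubic A 1 = 1 := by
  have h₁ : A - 1 ≠ 0 := by linarith
  have h₂ : A ^ 2 - 1 ≠ 0 := by nlinarith
  rw [lagrangeCubic, div_eq_one_iff_eq (mul_ne_zero h₁ h₂)]
  ring

theorem lagrangeCubic_self (A : ℝ) : lagrangeCubic A A = 0 := by
  simp [lagrangeCubic]

theorem lagrangeCubic_sq (A : ℝ) : lagrangeCubic A (A ^ 2) = 0 := by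
  simp [lagrangeCubic]

theorem abs_lagrangeCubic_le {A v : ℝ} (hA : 2 ≤ A) (hv₀ : 0 ≤ v) (hv₁ : v ≤ 1) :
    |lagrangeCubic A v| ≤ 4 * v := by
  have hpos : 0 < (A - 1) * (A ^ 2 - 1) := mul_pos (by linarith) (by nlinarith)
  have hden : A ^ 3 ≤ 4 * ((A - 1) * (A ^ 2 - 1)) := by nlinarith [sq_nonneg (A - 2)]
  have hnum : |v * (v - A) * (v - A ^ 2)| ≤ v * A ^ 3 := by
    rw [abs_mul, abs_mul, abs_of_nonneg hv₀, abs_of_nonpos (by linarith),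
      abs_of_nonpos (by nlinarith)]
    have : (A - v) * (A ^ 2 - v) ≤ A * A ^ 2 := by nlinarith
    nlinarith
  rw [lagrangeCubic, abs_div, abs_of_pos hpos, div_le_iff₀ hpos]
  nlinarith

noncomputable def extractionWeight (A : ℝ) : Fin 3 → ℝ :=
  fun k ↦ ![A ^ 3, -(A + A ^ 2), 1] k / ((A - 1) * (A ^ 2 - 1))

noncomputable def extractionRate (A : ℝ) : Fin 3 → ℝ :=
  ![log A, 2 * log A, 3 * log A]

noncomputable def extractionKernel (A t : ℝ) : ℝ :=
  ∑ k, extractionWeight A k * exp (-(extractionRate A k) * t)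

theorem extractionRate_pos {A : ℝ} (hA : 1 < A) (k : Fin 3) : 0 < extractionRate A k := by
  have := log_pos hA
  fin_cases k <;> simp [extractionRate] <;> linarith

theorem extractionKernel_eq (A t : ℝ) :
    extractionKernel A t = lagrangeCubic A (exp (-log A * t)) := by
  have h₂ : exp (-(2 * log A) * t) = exp (-log A * t) ^ 2 := by
    rw [← exp_nat_mul]; push_cast; ring_nf
  have h₃ : exp (-(3 * log A) * t) = exp (-log A * t) ^ 3 := by
    rw [← exp_nat_mul]; push_cast; ring_nf
  simp only [extractionKernel, extractionWeight, extractionRate, Fin.sum_univ_three,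
    Matrix.cons_val_zero, Matrix.cons_val_one, Matrix.cons_val_two, Matrix.head_cons,
    Matrix.tail_cons, h₂, h₃, lagrangeCubic]
  ring

theorem extractionKernel_zero {A : ℝ} (hA : 1 < A) : extractionKernel A 0 = 1 := by
  rw [extractionKernel_eq, mul_zero, exp_zero, lagrangeCubic_one hA]

theorem extractionKernel_neg_one {A : ℝ} (hA : 0 < A) : extractionKernel A (-1) = 0 := by
  rw [extractionKernel_eq, neg_mul_neg, mul_one, exp_log hA, lagrangeCubic_self]

theorem extractionKernel_neg_two {A : ℝ} (hA : 0 < A) : extractionKernel A (-2) = 0 := by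
  have : exp (-log A * -2) = A ^ 2 := by
    rw [neg_mul_neg, mul_comm, ← exp_log hA, ← exp_nat_mul, log_exp]; norm_num
  rw [extractionKernel_eq, this, lagrangeCubic_sq]

theorem abs_extractionKernel_natCast_add_one_le {A : ℝ} (hA : 2 ≤ A) (n : ℕ) :
    |extractionKernel A (n + 1)| ≤ 4 / A * A⁻¹ ^ n := by
  have hA₀ : 0 < A := by linarith
  have hu : exp (-log A * (n + 1)) = A⁻¹ ^ (n + 1) := by
    rw [← exp_log (inv_pos.mpr hA₀), ← exp_nat_mul, log_inv]; push_cast; ring_nf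
  have hu₁ : A⁻¹ ^ (n + 1) ≤ 1 := pow_le_one₀ (by positivity) (inv_le_one_of_one_le₀ (by linarith))
  calc |extractionKernel A (n + 1)| ≤ 4 * A⁻¹ ^ (n + 1) := by
        rw [extractionKernel_eq, hu]; exact abs_lagrangeCubic_le hA (by positivity) hu₁
    _ = 4 / A * A⁻¹ ^ n := by rw [pow_succ']; ring

theorem extractionKernel_natCast_sub_eq_zero {A : ℝ} (hA : 0 < A) {s B : ℕ} (hsB : s < B)
    (hB : B ≤ 2) : extractionKernel A (s - B) = 0 := by
  obtain rfl | rfl : B = s + 1 ∨ B = s + 2 := by omega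
  · simpa using extractionKernel_neg_one hA
  · simpa using extractionKernel_neg_two hA

/-- with `g(x) = x + 1` on the alphabet `{−1,0,1}`, for every `ε > 0` there is
a shifted sum of `m` decaying exponentials (a dot-product attention head) extracting the
adaptively located token `x(g(x(0)))` to uniform accuracy `ε` over all input sequences. -/
theorem stmt8 :
    ∀ ε : ℝ, 0 < ε →
      ∃ m : ℕ, 0 < m ∧
        ∃ α β : Fin m → ℝ, (∀ k, 0 < β k) ∧
          ∀ x : ℕ → ℤ, (∀ s, x s ∈ ({-1, 0, 1} : Set ℤ)) →
            |(∑' s : ℕ,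
                (∑ k, α k * Real.exp (-(β k) * ((s : ℝ) - ((x 0 : ℝ) + 1)))) * (x s : ℝ))
              - ((x ((x 0 + 1).toNat) : ℝ))| ≤ ε := by
  intro ε hε
  set A : ℝ := 4 / ε + 2
  have hA : 2 ≤ A := by simp only [A]; linarith [div_pos four_pos hε]
  refine ⟨3, by norm_num, extractionWeight A, extractionRate A,
    extractionRate_pos (by linarith), fun x hx ↦ ?_⟩
  have hx' : ∀ s, x s = -1 ∨ x s = 0 ∨ x s = 1 := by simpa using hx
  set B := (x 0 + 1).toNat
  obtain ⟨hB₂, hB⟩ : B ≤ 2 ∧ (x 0 : ℝ) + 1 = B := by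
    rcases hx' 0 with h | h | h <;> simp [B, h, one_add_one_eq_two]
  have htoken : ∀ s, |(x s : ℝ)| ≤ 1 := fun s ↦ by
    rcases hx' s with h | h | h <;> simp [h]
  calc _ ≤ 4 / A / (1 - A⁻¹) := by
        rw [hB]
        refine abs_tsum_mul_sub_le_of_geometric_tail (c := fun s ↦ extractionKernel A (s - B))
          (by positivity) (inv_lt_one_of_one_lt₀ (by linarith)) htoken
          (fun s hs ↦ extractionKernel_natCast_sub_eq_zero (by linarith) hs hB₂)
          (by simpa using extractionKernel_zero (by linarith)) fun j ↦ ?_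
        simpa [add_sub_assoc, add_assoc] using abs_extractionKernel_natCast_add_one_le hA j
    _ ≤ ε := by
        have hA₁ : A - 1 = 4 / ε + 1 := by ring
        rw [show 4 / A / (1 - A⁻¹) = 4 / (A - 1) by field_simp, hA₁, div_le_iff₀ (by positivity)]
        field_simp
        linarith
end
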